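/- arXiv:0710.5885 — 3 statements merged into one kernel-verified Lean document; each statement's English description precedes it below -/
import Mathlib

section
/- For a non-crossing partition π of {1,...,j}, define σ_π ∈ S(j) by letting σ_π(i) be the next element after i in the same block as i with respect to the cyclic order (1,2,...,j). Then σ_π is a permutation whose orbits are exactly the blocks of π, and σ_π lies in the interval [id, (1 2 ... j)] of the absolute order on S(j). -/
/-- The minimal number of transpositions needed to write `σ` as a product of
transpositions (`0` for the identity). -/
noncomputable def transLength {n : ℕ} (σ : Equiv.Perm (Fin n)) : ℕ :=
  sInf {h | ∃ L : List (Equiv.Perm (Fin n)), L.length = h ∧ (∀ x ∈ L, x.IsSwap) ∧ L.prod = σ}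

/-- The setoid on `Fin n` whose classes are the orbits (cycles, including fixed
points) of the permutation `τ`. -/
def cycleSetoid {n : ℕ} (τ : Equiv.Perm (Fin n)) : Setoid (Fin n) :=
  ⟨τ.SameCycle, ⟨fun x => Equiv.Perm.SameCycle.refl τ x, fun h => h.symm, fun h h' => h.trans h'⟩⟩

/-- The number of orbits of `{1,…,n}` under `τ` (fixed points count as cycles). -/
noncomputable def cycleCount {n : ℕ} (τ : Equiv.Perm (Fin n)) : ℕ :=
  Nat.card (Quotient (cycleSetoid τ))

/-- The absolute order on the symmetric group: `σ ≤ σ'` iff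
`l(σ') = l(σ) + l(σ⁻¹σ')` where `l` is the transposition length. -/
noncomputable def absLe {n : ℕ} (σ σ' : Equiv.Perm (Fin n)) : Prop :=
  transLength σ' = transLength σ + transLength (σ⁻¹ * σ')

/-- A partition (setoid) of `Fin j` is non-crossing if there are no
`a < b < c < d` with `a,c` in one block and `b,d` in a different block. -/
def NonCrossing {j : ℕ} (π : Setoid (Fin j)) : Prop :=
  ¬ ∃ a b c d : Fin j, a < b ∧ b < c ∧ c < d ∧ π.r a c ∧ π.r b d ∧ ¬ π.r a b

open Fin.NatCast in
/-- For a partition `π` of `Fin j`, `nextElem π i` is the next element after `i`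
in the same block as `i`, for the cyclic order `(1,2,…,j)`. -/
noncomputable def nextElem {j : ℕ} [NeZero j] (π : Setoid (Fin j)) (i : Fin j) : Fin j :=
  i + ((sInf {t : ℕ | 0 < t ∧ π.r i (i + (t : Fin j))} : ℕ) : Fin j)

/-!
Write `l σ` for the transposition length. Multiplying by a transposition changes the number of
cycles by at most one, and `(x σx) * σ` has one cycle more than `σ` when `σ x ≠ x`, so
`l σ + cycleCount σ = n`. Since `l` is subadditive, `σ ≤ c = (1 2 … j)` amounts to
`cycleCount σ + cycleCount (σ⁻¹ c) ≥ j + 1`.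

With `τ = σ⁻¹ c` we have `τ p = σ⁻¹ (p + 1)`. For every `p`, either `p + 1` is the least element
of its block, or its block-predecessor `w` is smaller than `p + 1`; then non-crossing
confines every block meeting `(w, p + 1)` to that gap, so `[w, p]` is `τ`-stable and `p` is the
largest element of its `τ`-cycle. Both happen for `p = j - 1`, hence there are at least `j + 1`
block minima and cycle maxima together.
-/

open Equiv Equiv.Perm Finset
open Fin.NatCast

namespace Setoid

variable {α : Type*}

def merge (s : Setoid α) (a b : α) : Setoid α where
  r x y := s x y ∨ (s x a ∧ s b y) ∨ (s x b ∧ s a y)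
  iseqv := by
    refine ⟨fun x => .inl (s.refl x), ?_, ?_⟩
    · rintro x y (h | ⟨h₁, h₂⟩ | ⟨h₁, h₂⟩)
      exacts [.inl (s.symm h), .inr (.inr ⟨s.symm h₂, s.symm h₁⟩),
        .inr (.inl ⟨s.symm h₂, s.symm h₁⟩)]
    · rintro x y z (h | ⟨h₁, h₂⟩ | ⟨h₁, h₂⟩) (h' | ⟨h₁', h₂'⟩ | ⟨h₁', h₂'⟩)
      exacts [.inl (s.trans h h'), .inr (.inl ⟨s.trans h h₁', h₂'⟩),
        .inr (.inr ⟨s.trans h h₁', h₂'⟩), .inr (.inl ⟨h₁, s.trans h₂ h'⟩),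
        .inl (s.trans h₁ (s.trans (s.symm (s.trans h₂ h₁')) h₂')), .inl (s.trans h₁ h₂'),
        .inr (.inr ⟨h₁, s.trans h₂ h'⟩), .inl (s.trans h₁ h₂'),
        .inl (s.trans h₁ (s.trans (s.symm (s.trans h₂ h₁')) h₂'))]

lemma le_merge (s : Setoid α) (a b : α) : s ≤ s.merge a b := fun _ _ h => .inl h

lemma merge_swap [DecidableEq α] (s : Setoid α) (a b x : α) : s.merge a b x (swap a b x) := by
  rcases eq_or_ne x a with rfl | hxa
  · exact .inr (.inl ⟨s.refl x, by simp⟩)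
  rcases eq_or_ne x b with rfl | hxb
  · exact .inr (.inr ⟨s.refl x, by simp⟩)
  rw [swap_apply_of_ne_of_ne hxa hxb]

variable [Finite α]

lemma card_quotient_le_of_le {s t : Setoid α} (h : s ≤ t) :
    Nat.card (Quotient t) ≤ Nat.card (Quotient s) :=
  Nat.card_le_card_of_surjective (Quot.factor _ _ h) (Quot.ind fun x => ⟨Quot.mk _ x, rfl⟩)

lemma card_quotient_lt_of_le {s t : Setoid α} (h : s ≤ t) {a b : α} (hab : t a b)
    (hn : ¬ s a b) : Nat.card (Quotient t) < Nat.card (Quotient s) := by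
  classical
  have := Fintype.ofFinite α
  simp only [Nat.card_eq_fintype_card]
  refine Fintype.card_lt_of_surjective_not_injective (Quot.factor _ _ h)
    (Quot.ind fun x => ⟨Quot.mk _ x, rfl⟩) fun hinj => hn (Quotient.exact ?_)
  exact hinj (Quot.sound hab)

lemma card_quotient_le_card_quotient_merge_add_one (s : Setoid α) (a b : α) :
    Nat.card (Quotient s) ≤ Nat.card (Quotient (s.merge a b)) + 1 := by
  classical
  let f : Quotient s → Quotient (s.merge a b) ⊕ Unit :=
    Quotient.lift (fun x => if s x a then .inr () else .inl ⟦x⟧) fun x y hxy => by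
      by_cases hxa : s x a
      · simp [hxa, s.trans (s.symm hxy) hxa]
      · have hya : ¬ s y a := fun hya => hxa (s.trans hxy hya)
        simp only [hxa, hya, if_false, Sum.inl.injEq]
        exact Quotient.sound (Or.inl hxy)
  have hf : Function.Injective f := by
    refine Quotient.ind₂ fun x y hxy => ?_
    by_cases hxa : s x a <;> by_cases hya : s y a <;>
      simp only [f, Quotient.lift_mk, hxa, hya, if_true, if_false, reduceCtorEq,
        Sum.inl.injEq] at hxy
    · exact Quotient.sound (s.trans hxa (s.symm hya))
    · rcases Quotient.exact hxy with h | ⟨h, -⟩ | ⟨-, h⟩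
      exacts [Quotient.sound h, absurd h hxa, absurd (s.symm h) hya]
  simpa using Nat.card_le_card_of_injective f hf

end Setoid

lemma Finset.card_le_card_quotient {α : Type*} [Finite α] (s : Setoid α) (t : Finset α)
    (ht : ∀ x ∈ t, ∀ y ∈ t, s x y → x = y) : #t ≤ Nat.card (Quotient s) := by
  rw [← Nat.card_eq_finsetCard]
  exact Nat.card_le_card_of_injective (fun x : t => (⟦x.1⟧ : Quotient s))
    fun x y h => Subtype.ext (ht _ x.2 _ y.2 (Quotient.exact h))

lemma Equiv.Perm.SameCycle.mem_of_mapsTo {α : Type*} [Finite α] {f : Perm α} {S : Set α}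
    (hS : Set.MapsTo f S S) {x y : α} (hx : x ∈ S) (h : f.SameCycle x y) : y ∈ S := by
  obtain ⟨k, rfl⟩ := h.exists_nat_pow_eq
  rw [coe_pow]
  exact hS.iterate k hx

lemma Equiv.Perm.sameCycle_swap_apply {α : Type*} [DecidableEq α] {f : Perm α} {a b : α}
    (hab : f.SameCycle a b) (x : α) : f.SameCycle x (swap a b x) := by
  rcases eq_or_ne x a with rfl | hxa
  · simpa using hab
  rcases eq_or_ne x b with rfl | hxb
  · simpa using hab.symm
  rw [swap_apply_of_ne_of_ne hxa hxb]

section CycleCount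

variable {n : ℕ}

lemma cycleSetoid_le {τ : Perm (Fin n)} {s : Setoid (Fin n)} (h : ∀ x, s x (τ x)) :
    cycleSetoid τ ≤ s := fun x _ hxy =>
  SameCycle.mem_of_mapsTo (S := {z | s x z}) (fun _ hz => s.trans hz (h _)) (s.refl x) hxy

lemma cycleCount_one : cycleCount (1 : Perm (Fin n)) = n := by
  have : cycleSetoid (1 : Perm (Fin n)) = ⊥ := by
    ext x y
    exact sameCycle_one
  rw [cycleCount, this, Nat.card_congr (Setoid.quotientBotEquiv (α := Fin n)), Nat.card_fin]

lemma cycleCount_finRotate (m : ℕ) : cycleCount (finRotate (m + 1)) = 1 := by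
  have hzero : ∀ y, (finRotate (m + 1)).SameCycle 0 y :=
    Fin.induction (.refl _ _) fun i hi => hi.trans <| by
      rw [← Fin.coeSucc_eq_succ, ← finRotate_apply]
      exact sameCycle_apply_right.2 (.refl _ _)
  rw [cycleCount, Nat.card_eq_one_iff_unique]
  exact ⟨⟨Quotient.ind₂ fun x y => Quotient.sound ((hzero x).symm.trans (hzero y))⟩, ⟨⟦0⟧⟩⟩

lemma cycleCount_le_cycleCount_swap_mul_add_one (a b : Fin n) (ρ : Perm (Fin n)) :
    cycleCount ρ ≤ cycleCount (swap a b * ρ) + 1 := by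
  set U := (cycleSetoid ρ).merge a b
  have hU : cycleSetoid (swap a b * ρ) ≤ U := cycleSetoid_le fun x =>
    U.trans (Setoid.le_merge _ a b (sameCycle_apply_right.2 (.refl ρ x)))
      (Setoid.merge_swap _ a b (ρ x))
  exact ((cycleSetoid ρ).card_quotient_le_card_quotient_merge_add_one a b).trans
    (Nat.add_le_add_right (Setoid.card_quotient_le_of_le hU) 1)

lemma cycleCount_lt_cycleCount_swap_mul {σ : Perm (Fin n)} {x : Fin n} (hx : σ x ≠ x) :
    cycleCount σ < cycleCount (swap x (σ x) * σ) := by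
  have hxσx : σ.SameCycle x (σ x) := sameCycle_apply_right.2 (.refl σ x)
  refine Setoid.card_quotient_lt_of_le (cycleSetoid_le fun y => ?_) hxσx fun h => hx ?_
  · exact (sameCycle_apply_right.2 (.refl σ y)).trans (sameCycle_swap_apply hxσx (σ y))
  · exact (SameCycle.eq_of_left h (by simp [Function.IsFixedPt])).symm

end CycleCount

section TransLength

variable {n : ℕ}

lemma le_length_add_cycleCount_prod (L : List (Perm (Fin n))) (hL : ∀ s ∈ L, s.IsSwap) :
    n ≤ L.length + cycleCount L.prod := by
  induction L with
  | nil => simp [cycleCount_one]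
  | cons s L ih =>
    obtain ⟨a, b, -, rfl⟩ := hL s List.mem_cons_self
    have h := cycleCount_le_cycleCount_swap_mul_add_one a b L.prod
    have := ih fun t ht => hL t (List.mem_cons_of_mem _ ht)
    simp only [List.length_cons, List.prod_cons]
    omega

lemma exists_swap_list_length_add_cycleCount_le (σ : Perm (Fin n)) :
    ∃ L : List (Perm (Fin n)), (∀ s ∈ L, s.IsSwap) ∧ L.prod = σ ∧
      L.length + cycleCount σ ≤ n := by
  induction hk : σ.support.card using Nat.strong_induction_on generalizing σ with
  | _ k ih =>
    by_cases hσ : σ = 1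
    · exact ⟨[], by simp, by simp [hσ], by simp [hσ, cycleCount_one]⟩
    obtain ⟨x, hx⟩ : ∃ x, σ x ≠ x := by simpa [Perm.ext_iff] using hσ
    obtain ⟨L, hL, hprod, hlen⟩ := ih _ (hk ▸ card_support_swap_mul hx) _ rfl
    refine ⟨swap x (σ x) :: L, ?_, by simp [hprod], ?_⟩
    · rintro s (_ | ⟨_, hs⟩)
      exacts [⟨x, σ x, hx.symm, rfl⟩, hL s hs]
    · have := cycleCount_lt_cycleCount_swap_mul hx
      simp only [List.length_cons]
      omega

lemma exists_swap_list_length_eq_transLength (σ : Perm (Fin n)) :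
    ∃ L : List (Perm (Fin n)), L.length = transLength σ ∧ (∀ s ∈ L, s.IsSwap) ∧ L.prod = σ := by
  obtain ⟨L, hL, hprod, -⟩ := exists_swap_list_length_add_cycleCount_le σ
  exact Nat.sInf_mem (s := {h | ∃ L : List (Perm (Fin n)), L.length = h ∧ (∀ s ∈ L, s.IsSwap) ∧
    L.prod = σ}) ⟨L.length, L, rfl, hL, hprod⟩

lemma transLength_add_cycleCount (σ : Perm (Fin n)) : transLength σ + cycleCount σ = n := by
  obtain ⟨L, hL, hprod, hlen⟩ := exists_swap_list_length_add_cycleCount_le σ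
  obtain ⟨L₀, hlen₀, hL₀, rfl⟩ := exists_swap_list_length_eq_transLength σ
  have hle : transLength L₀.prod ≤ L.length := Nat.sInf_le ⟨L, rfl, hL, hprod⟩
  have := le_length_add_cycleCount_prod L₀ hL₀
  omega

lemma transLength_one : transLength (1 : Perm (Fin n)) = 0 := by
  have := transLength_add_cycleCount (1 : Perm (Fin n))
  rw [cycleCount_one] at this
  omega

lemma transLength_mul_le (σ ρ : Perm (Fin n)) :
    transLength (σ * ρ) ≤ transLength σ + transLength ρ := by
  obtain ⟨L₁, hlen₁, hL₁, rfl⟩ := exists_swap_list_length_eq_transLength σ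
  obtain ⟨L₂, hlen₂, hL₂, rfl⟩ := exists_swap_list_length_eq_transLength ρ
  rw [← hlen₁, ← hlen₂, ← List.length_append, ← List.prod_append]
  refine Nat.sInf_le ⟨_, rfl, fun s hs => ?_, rfl⟩
  rcases List.mem_append.1 hs with hs | hs
  exacts [hL₁ s hs, hL₂ s hs]

lemma absLe_one_left (σ : Perm (Fin n)) : absLe 1 σ := by
  simp [absLe, transLength_one]

lemma absLe_of_add_cycleCount_le {σ σ' : Perm (Fin n)}
    (h : n + cycleCount σ' ≤ cycleCount σ + cycleCount (σ⁻¹ * σ')) : absLe σ σ' := by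
  have hsub := transLength_mul_le σ (σ⁻¹ * σ')
  rw [mul_inv_cancel_left] at hsub
  have := transLength_add_cycleCount σ
  have := transLength_add_cycleCount σ'
  have := transLength_add_cycleCount (σ⁻¹ * σ')
  unfold absLe
  omega

end TransLength

section NextElem

variable {j : ℕ} [NeZero j]

lemma Fin.val_sub_add_val_sub (a b c : Fin j) :
    (c - b).val + (b - a).val = (c - a).val ∨ (c - b).val + (b - a).val = (c - a).val + j := by
  have h := Fin.val_add_eq_ite (c - b) (b - a)
  rw [sub_add_sub_cancel] at h
  split_ifs at h <;> omega

lemma Fin.val_sub_pos {x y : Fin j} (h : y ≠ x) : 0 < (y - x).val :=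
  Nat.pos_of_ne_zero fun h' => h (sub_eq_zero.1 (Fin.ext h'))

variable (π : Setoid (Fin j))

lemma rel_nextElem (i : Fin j) : π i (nextElem π i) :=
  (Nat.sInf_mem (s := {t : ℕ | 0 < t ∧ π i (i + (t : Fin j))})
    ⟨j, NeZero.pos j, by simp⟩).2

lemma val_nextElem_sub_le {i z : Fin j} (hz : π i z) (hzi : z ≠ i) :
    0 < (nextElem π i - i).val ∧ (nextElem π i - i).val ≤ (z - i).val := by
  set T := {t : ℕ | 0 < t ∧ π i (i + (t : Fin j))}
  have hz : (z - i).val ∈ T := ⟨Fin.val_sub_pos hzi, by rwa [Fin.cast_val_eq_self, add_sub_cancel]⟩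
  have hle : sInf T ≤ (z - i).val := Nat.sInf_le hz
  have hval : (nextElem π i - i).val = sInf T := by
    rw [nextElem, add_sub_cancel_left, Fin.val_natCast,
      Nat.mod_eq_of_lt (hle.trans_lt (z - i).isLt)]
  rw [hval]
  exact ⟨(Nat.sInf_mem ⟨_, hz⟩).1, hle⟩

lemma nextElem_injective : Function.Injective (nextElem π) := by
  intro a b hab
  by_contra hne
  have hk := rel_nextElem π a
  have hk' := rel_nextElem π b
  rw [hab] at hk
  have ⟨ha₁, ha₂⟩ := val_nextElem_sub_le π (π.trans hk (π.symm hk')) (Ne.symm hne)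
  have ⟨hb₁, hb₂⟩ := val_nextElem_sub_le π (π.trans hk' (π.symm hk)) hne
  rw [hab] at ha₁ ha₂
  have hloop := Fin.val_sub_add_val_sub a b a
  have hpath := Fin.val_sub_add_val_sub a b (nextElem π b)
  have := (nextElem π b - b).isLt
  rw [sub_self, Fin.val_zero] at hloop
  omega

lemma sameCycle_iff_rel {σ : Perm (Fin j)} (hσ : ∀ i, σ i = nextElem π i) (x y : Fin j) :
    σ.SameCycle x y ↔ π x y := by
  refine ⟨fun h => cycleSetoid_le (s := π) (fun i => hσ i ▸ rel_nextElem π i) h,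
    fun hxy => ?_⟩
  induction hk : (y - x).val using Nat.strong_induction_on generalizing x with
  | _ k ih =>
    rcases eq_or_ne y x with rfl | hyx
    · exact .refl σ y
    have hx' : π x (σ x) := hσ x ▸ rel_nextElem π x
    have ⟨h₁, h₂⟩ := val_nextElem_sub_le π hxy hyx
    rw [← hσ] at h₁ h₂
    have := Fin.val_sub_add_val_sub x (σ x) y
    have := (y - σ x).isLt
    refine (sameCycle_apply_right.2 (.refl σ x)).trans
      (ih _ ?_ (σ x) (π.trans (π.symm hx') hxy) rfl)
    omega

lemma notMem_Ioo_nextElem {w z : Fin j} (hz : π w z) : z ∉ Set.Ioo w (nextElem π w) := by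
  rintro ⟨hwz, hzf⟩
  obtain ⟨-, hle⟩ := val_nextElem_sub_le π hz hwz.ne'
  rw [Fin.sub_val_of_le hwz.le, Fin.sub_val_of_le (hwz.trans hzf).le] at hle
  omega

lemma lt_nextElem_of_rel_of_lt {w a : Fin j} (ha : π w a) (hlt : a < nextElem π w) :
    w < nextElem π w := by
  by_contra! hle
  rcases eq_or_ne a w with rfl | haw
  · exact absurd hlt (not_lt.2 hle)
  have ⟨hpos, hle'⟩ := val_nextElem_sub_le π ha haw
  rcases hle.lt_or_eq with hfw | hfw
  · rw [Fin.coe_sub_iff_lt.2 hfw, Fin.coe_sub_iff_lt.2 (hlt.trans hfw)] at hle'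
    omega
  · simp [hfw] at hpos

end NextElem

lemma NonCrossing.rel_mem_Ioo {j : ℕ} {π : Setoid (Fin j)} (hπ : NonCrossing π)
    {w i z v : Fin j} (hwi : π w i) (hgap : ∀ y, π w y → y ∉ Set.Ioo w i)
    (hz : z ∈ Set.Ioo w i) (hzv : π z v) : v ∈ Set.Ioo w i := by
  have hwz : ¬ π w z := fun h => hgap z h hz
  obtain ⟨hwz', hzi⟩ := hz
  refine ⟨lt_of_not_ge fun hvw => ?_, lt_of_not_ge fun hiv => ?_⟩
  · rcases hvw.lt_or_eq with hvw | rfl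
    · exact hπ ⟨v, w, z, i, hvw, hwz', hzi, π.symm hzv, hwi,
        fun h => hwz (π.trans (π.symm h) (π.symm hzv))⟩
    · exact hwz (π.symm hzv)
  · rcases hiv.lt_or_eq with hiv | rfl
    · exact hπ ⟨w, z, i, v, hwz', hzi, hiv, hwi, hzv, hwz⟩
    · exact hwz (π.trans hwi (π.symm hzv))

section Kreweras

variable {m : ℕ} {π : Setoid (Fin (m + 1))} {σ : Perm (Fin (m + 1))}

lemma succ_isMin_block_or_isMax_cycle (hπ : NonCrossing π) (hσ : ∀ i, σ i = nextElem π i)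
    (p : Fin (m + 1)) :
    (∀ y, π (p + 1) y → p + 1 ≤ y) ∨ ∀ y, (σ⁻¹ * finRotate (m + 1)).SameCycle p y → y ≤ p := by
  refine or_iff_not_imp_left.2 fun hmin => ?_
  push Not at hmin
  obtain ⟨a, ha, hap⟩ := hmin
  set i := p + 1
  have hp : p ≠ Fin.last m := by rintro rfl; simp [i] at hap
  have hi : i.val = p.val + 1 := by simp [i, Fin.val_add_one, hp]
  have hσinv : ∀ v, nextElem π (σ⁻¹ v) = v := fun v => by rw [← hσ]; exact σ.apply_symm_apply v
  have hrel : ∀ v, π (σ⁻¹ v) v := fun v => by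
    simpa only [hσinv] using rel_nextElem π (σ⁻¹ v)
  set w := σ⁻¹ i
  have hwi : π w i := hrel i
  have hw : w < i := hσinv i ▸ lt_nextElem_of_rel_of_lt π (π.trans hwi ha) ((hσinv i).symm ▸ hap)
  have hgap : ∀ z, π w z → z ∉ Set.Ioo w i := fun z hz => hσinv i ▸ notMem_Ioo_nextElem π hz
  have hmaps : Set.MapsTo (σ⁻¹ * finRotate (m + 1)) (Set.Icc w p) (Set.Icc w p) := by
    rintro y ⟨hwy, hyp⟩
    have hy : y ≠ Fin.last m := by
      rintro rfl; exact hp (le_antisymm (Fin.le_last p) hyp)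
    have hy1 : (y + 1).val = y.val + 1 := by simp [Fin.val_add_one, hy]
    rw [Perm.mul_apply, finRotate_apply]
    rcases eq_or_ne (y + 1) i with h | h
    · rw [h]
      exact ⟨le_rfl, by omega⟩
    · have hne : (y + 1).val ≠ i.val := fun h' => h (Fin.ext h')
      have hv := hπ.rel_mem_Ioo hwi hgap (z := y + 1) ⟨by omega, by omega⟩ (π.symm (hrel (y + 1)))
      exact ⟨hv.1.le, by have := hv.2; omega⟩
  have hwp : w ≤ p := by omega
  exact fun y hy => (hy.mem_of_mapsTo hmaps ⟨hwp, le_rfl⟩).2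

lemma add_two_le_cycleCount_add_cycleCount (hπ : NonCrossing π)
    (hσ : ∀ i, σ i = nextElem π i) :
    m + 2 ≤ cycleCount σ + cycleCount (σ⁻¹ * finRotate (m + 1)) := by
  classical
  set τ := σ⁻¹ * finRotate (m + 1)
  set A : Finset (Fin (m + 1)) := {p | ∀ y, π (p + 1) y → p + 1 ≤ y}
  set B : Finset (Fin (m + 1)) := {p | ∀ y, τ.SameCycle p y → y ≤ p}
  have hA : #A ≤ cycleCount σ := by
    rw [← card_image_of_injective A (add_left_injective 1)]
    refine card_le_card_quotient _ _ ?_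
    simp only [mem_image, mem_filter, mem_univ, true_and, A]
    rintro _ ⟨p, hp, rfl⟩ _ ⟨q, hq, rfl⟩ hpq
    have := (sameCycle_iff_rel π hσ _ _).1 hpq
    exact le_antisymm (hp _ this) (hq _ (π.symm this))
  have hB : #B ≤ cycleCount τ := card_le_card_quotient _ _ fun p hp q hq hpq =>
    le_antisymm ((mem_filter.1 hq).2 _ hpq.symm) ((mem_filter.1 hp).2 _ hpq)
  have hunion : A ∪ B = univ := eq_univ_of_forall fun p => by
    simpa [A, B] using succ_isMin_block_or_isMax_cycle hπ hσ p
  have hinter : (A ∩ B).Nonempty := ⟨Fin.last m, by simp [A, B, Fin.le_last]⟩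
  have := card_union_add_card_inter A B
  rw [hunion, card_univ, Fintype.card_fin] at this
  have := hinter.card_pos
  omega

end Kreweras

/-- for a non-crossing partition `π` of `{1,…,j}`, the map sending
`i` to the next element of its block in the cyclic order `(1,2,…,j)` is a
bijection; any permutation `σ_π` realizing it has orbits exactly the blocks of
`π` and lies in the interval `[id, (1 2 … j)]` of the absolute order. -/
theorem sigmaPi_mem_interval (j : ℕ) [NeZero j] (π : Setoid (Fin j)) (hπ : NonCrossing π) :
    Function.Bijective (nextElem π) ∧
    ∀ σ : Equiv.Perm (Fin j), (∀ i, σ i = nextElem π i) →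
      (∀ x y, σ.SameCycle x y ↔ π.r x y) ∧ absLe 1 σ ∧ absLe σ (finRotate j) := by
  obtain ⟨m, rfl⟩ : ∃ m, j = m + 1 := ⟨j - 1, (Nat.succ_pred_eq_of_pos (NeZero.pos j)).symm⟩
  refine ⟨(nextElem_injective π).bijective_of_finite, fun σ hσ =>
    ⟨sameCycle_iff_rel π hσ, absLe_one_left σ, absLe_of_add_cycleCount_le ?_⟩⟩
  rw [cycleCount_finRotate]
  exact add_two_le_cycleCount_add_cycleCount hπ hσ
end

section
/- Let G be a bicolored graph with white vertices V_w and black vertices V_b, and define N(G) = Σ_ψ Π_{w∈V_w} p_{ψ(w)} Π_{b∈V_b} q_{ψ(b)}, summed over admissible evaluations ψ: V → ℕ* (those with ψ(b) ≥ ψ(w) for every edge between white w and black b). If L is an oriented loop in G with erasable edge set E(L) (edges of L traversed white-to-black), then N(G) = Σ_{∅≠E'⊆E(L)} (−1)^{|E'|−1} N(G∖E'), where G∖E' is G with the edges of E' removed. -/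
open scoped Classical in
/-- The power series (specialized to `m` rectangles) associated to a bicolored
graph: white vertices `W`, black vertices `B`, active edges `S` going from
`src e` (white) to `tgt e` (black).  It is the sum, over admissible evaluations
`ψ` (those with `ψ(black) ≥ ψ(white)` along every active edge), of
`∏ p_{ψ(w)} · ∏ q_{ψ(b)}`. -/
noncomputable def NGraph {W B E : Type} [Fintype W] [Fintype B] [Fintype E]
    (src : E → W) (tgt : E → B) (S : Finset E) {m : ℕ} (p q : Fin m → ℝ) : ℝ :=
  ∑ ψw : W → Fin m, ∑ ψb : B → Fin m,
    if ∀ e ∈ S, ψw (src e) ≤ ψb (tgt e) then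
      (∏ w : W, p (ψw w)) * (∏ b : B, q (ψb b)) else 0

/-- The power series `N^{τ,τ̄}` of a pair of permutations: the one of its
bicolored graph, whose white vertices are the cycles of `τ`, black vertices the
cycles of `τ̄`, with an edge for every `i ∈ {1,…,k}`. -/
noncomputable def Nperm {k : ℕ} (τ τb : Equiv.Perm (Fin k)) {m : ℕ} (p q : Fin m → ℝ) : ℝ :=
  letI : Fintype (Quotient (cycleSetoid τ)) := Fintype.ofFinite _
  letI : Fintype (Quotient (cycleSetoid τb)) := Fintype.ofFinite _
  NGraph (fun i : Fin k => Quotient.mk (cycleSetoid τ) i)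
    (fun i : Fin k => Quotient.mk (cycleSetoid τb) i) Finset.univ p q

/-- Stanley's formula for the normalized character `Σ_k` on a `k`-cycle, as a
power series in the multirectangular coordinates `p,q`:
`Σ_k = ∑_{τ τ̄ = (1…k)} (-1)^{|C(τ)|+1} N^{τ,τ̄}`. -/
noncomputable def SigmaStanley (k : ℕ) {m : ℕ} (p q : Fin m → ℝ) : ℝ :=
  ∑ τ : Equiv.Perm (Fin k),
    (-1 : ℝ) ^ (cycleCount τ + 1) * Nperm τ (τ⁻¹ * finRotate k) p q

/-- The free cumulant `R_j` as a power series in the multirectangular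
coordinates `p,q`: the graded degree `j` part of `Σ_{j-1}`, i.e. the part of
Stanley's formula coming from minimal factorizations:
`R_{l+1} = ∑_{τ τ̄ = (1…l), |C(τ)|+|C(τ̄)| = l+1} (-1)^{|C(τ)|+1} N^{τ,τ̄}`. -/
noncomputable def Rcum (j : ℕ) {m : ℕ} (p q : Fin m → ℝ) : ℝ :=
  ∑ τ : Equiv.Perm (Fin (j - 1)),
    if cycleCount τ + cycleCount (τ⁻¹ * finRotate (j - 1)) = j then
      (-1 : ℝ) ^ (cycleCount τ + 1) * Nperm τ (τ⁻¹ * finRotate (j - 1)) p q else 0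


open scoped Classical in
lemma sum_pow_neg_one_real {α : Type} (s : Finset α) :
    ∑ t ∈ s.powerset, (-1 : ℝ) ^ t.card = if s = ∅ then 1 else 0 := by
  have h := Finset.sum_powerset_neg_one_pow_card (x := s)
  have : ((∑ t ∈ s.powerset, (-1 : ℤ) ^ t.card : ℤ) : ℝ)
      = ∑ t ∈ s.powerset, (-1 : ℝ) ^ t.card := by push_cast; ring_nf
  rw [← this, h]
  split_ifs <;> simp

open scoped Classical in
lemma sum_interval_pow_neg_one {α : Type} (F V : Finset α) (hVF : V ⊆ F) :
    ∑ E' ∈ F.powerset.filter (fun E' => V ⊆ E'), (-1 : ℝ) ^ E'.card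
      = if F = V then (-1 : ℝ) ^ V.card else 0 := by
  have key : ∑ E' ∈ F.powerset.filter (fun E' => V ⊆ E'), (-1 : ℝ) ^ E'.card
      = ∑ D ∈ (F \ V).powerset, (-1 : ℝ) ^ (V ∪ D).card := by
    refine Finset.sum_nbij' (fun E' => E' \ V) (fun D => V ∪ D) ?_ ?_ ?_ ?_ ?_
    · intro a ha
      simp only [Finset.mem_filter, Finset.mem_powerset] at ha ⊢
      exact Finset.sdiff_subset_sdiff ha.1 (le_refl V)
    · intro b hb
      simp only [Finset.mem_filter, Finset.mem_powerset] at hb ⊢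
      exact ⟨Finset.union_subset hVF (hb.trans Finset.sdiff_subset), Finset.subset_union_left⟩
    · intro a ha
      simp only [Finset.mem_filter, Finset.mem_powerset] at ha
      exact Finset.union_sdiff_of_subset ha.2
    · intro b hb
      simp only [Finset.mem_powerset] at hb
      have : Disjoint V b := Finset.disjoint_left.2 fun x hx hxb =>
        (Finset.mem_sdiff.1 (hb hxb)).2 hx
      show (V ∪ b) \ V = b
      rw [Finset.union_sdiff_cancel_left this]
    · intro a ha
      simp only [Finset.mem_filter, Finset.mem_powerset] at ha
      rw [Finset.union_sdiff_of_subset ha.2]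
  rw [key]
  have hdisj : ∀ D ∈ (F \ V).powerset, (V ∪ D).card = V.card + D.card := by
    intro D hD
    simp only [Finset.mem_powerset] at hD
    exact Finset.card_union_of_disjoint (Finset.disjoint_left.2 fun x hx hxb =>
      (Finset.mem_sdiff.1 (hD hxb)).2 hx)
  calc ∑ D ∈ (F \ V).powerset, (-1 : ℝ) ^ (V ∪ D).card
      = ∑ D ∈ (F \ V).powerset, (-1 : ℝ) ^ V.card * (-1 : ℝ) ^ D.card := by
        refine Finset.sum_congr rfl fun D hD => ?_
        rw [hdisj D hD, pow_add]
    _ = (-1 : ℝ) ^ V.card * ∑ D ∈ (F \ V).powerset, (-1 : ℝ) ^ D.card := by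
        rw [Finset.mul_sum]
    _ = if F = V then (-1 : ℝ) ^ V.card else 0 := by
        rw [sum_pow_neg_one_real]
        have : F \ V = ∅ ↔ F = V := by
          rw [Finset.sdiff_eq_empty_iff_subset]
          exact ⟨fun h => le_antisymm h hVF, fun h => h.le⟩
        split_ifs with h1 h2 h2 <;> simp_all [this]

open scoped Classical in
lemma key_sum {α : Type} (F V : Finset α) (hne : ¬(V ⊆ F ∧ F ⊆ V)) (X : ℝ) :
    ∑ E' ∈ F.powerset.erase ∅, (-1 : ℝ) ^ (E'.card - 1) * (if V ⊆ E' then X else 0)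
      = if V = ∅ then X else 0 := by
  by_cases hV : V = ∅
  · subst hV
    have hF : F ≠ ∅ := fun h => hne (by simp [h])
    rw [if_pos rfl]
    have h1 : ∀ E' ∈ F.powerset.erase ∅,
        (-1 : ℝ) ^ (E'.card - 1) * (if (∅ : Finset α) ⊆ E' then X else 0)
          = -((-1 : ℝ) ^ E'.card) * X := by
      intro E' hE'
      have hne' : E' ≠ ∅ := (Finset.mem_erase.1 hE').1
      have hc : 1 ≤ E'.card := Finset.card_pos.2 (Finset.nonempty_iff_ne_empty.2 hne')
      rw [if_pos (Finset.empty_subset _)]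
      have : (-1 : ℝ) ^ E'.card = (-1 : ℝ) ^ (E'.card - 1) * (-1) := by
        rw [← pow_succ, Nat.sub_add_cancel hc]
      rw [this]; ring
    rw [Finset.sum_congr rfl h1]
    have h2 : ∑ E' ∈ F.powerset.erase ∅, -((-1 : ℝ) ^ E'.card) * X
        = -(∑ E' ∈ F.powerset, (-1 : ℝ) ^ E'.card - 1) * X := by
      rw [← Finset.sum_mul]; congr 1
      rw [Finset.sum_erase_eq_sub (Finset.empty_mem_powerset F)]
      simp; ring
    rw [h2, sum_pow_neg_one_real, if_neg hF]; ring
  · rw [if_neg hV]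
    by_cases hVF : V ⊆ F
    · have hFV : ¬ F ⊆ V := fun h => hne ⟨hVF, h⟩
      have hstep : ∑ E' ∈ F.powerset.erase ∅,
          (-1 : ℝ) ^ (E'.card - 1) * (if V ⊆ E' then X else 0)
          = ∑ E' ∈ F.powerset, (-1 : ℝ) ^ (E'.card - 1) * (if V ⊆ E' then X else 0) := by
        rw [Finset.sum_erase_eq_sub (Finset.empty_mem_powerset F)]
        have : (if V ⊆ (∅ : Finset α) then X else 0) = 0 := by
          rw [if_neg]; intro h
          exact hV (Finset.subset_empty.1 h)
        rw [this]; ring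
      rw [hstep]
      have hfilter : ∑ E' ∈ F.powerset, (-1 : ℝ) ^ (E'.card - 1) * (if V ⊆ E' then X else 0)
          = ∑ E' ∈ F.powerset.filter (fun E' => V ⊆ E'), (-1 : ℝ) ^ (E'.card - 1) * X := by
        rw [Finset.sum_filter]
        refine Finset.sum_congr rfl fun E' _ => ?_
        split_ifs <;> ring
      rw [hfilter]
      have hmin : ∀ E' ∈ F.powerset.filter (fun E' => V ⊆ E'),
          (-1 : ℝ) ^ (E'.card - 1) * X = -((-1 : ℝ) ^ E'.card) * X := by
        intro E' hE'
        have hVE : V ⊆ E' := (Finset.mem_filter.1 hE').2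
        have hc : 1 ≤ E'.card := Finset.card_pos.2 <|
          (Finset.nonempty_iff_ne_empty.2 hV).mono hVE
        have : (-1 : ℝ) ^ E'.card = (-1 : ℝ) ^ (E'.card - 1) * (-1) := by
          rw [← pow_succ, Nat.sub_add_cancel hc]
        rw [this]; ring
      rw [Finset.sum_congr rfl hmin, ← Finset.sum_mul]
      have : ∑ E' ∈ F.powerset.filter (fun E' => V ⊆ E'), -((-1 : ℝ) ^ E'.card)
          = -∑ E' ∈ F.powerset.filter (fun E' => V ⊆ E'), (-1 : ℝ) ^ E'.card := by
        simp
      rw [this, sum_interval_pow_neg_one F V hVF, if_neg (fun h => hFV h.le)]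
      ring
    · refine Finset.sum_eq_zero fun E' hE' => ?_
      have hEF : E' ⊆ F := Finset.mem_powerset.1 (Finset.mem_of_mem_erase hE')
      rw [if_neg (fun h => hVF (h.trans hEF))]
      ring

open scoped Classical in
/-- the elementary transformation along an oriented loop leaves
`N` invariant.  The loop visits the pairwise distinct white vertices `wv i` and
black vertices `bv i`, travelling from `wv i` to `bv i` along the edge `fwd i`
(white-to-black: the erasable edges) and from `bv i` to `wv (i+1)` along the
edge `bwd i`, all these edges being distinct.  Then
`N(G) = ∑_{∅ ≠ E' ⊆ E(L)} (-1)^{|E'|-1} N(G \ E')`. -/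
theorem NGraph_loop_invariance
    (W B E : Type) [Fintype W] [Fintype B] [Fintype E]
    (src : E → W) (tgt : E → B)
    (l : ℕ) [NeZero l]
    (wv : Fin l → W) (bv : Fin l → B) (fwd bwd : Fin l → E)
    (hwv : Function.Injective wv) (hbv : Function.Injective bv)
    (hinj : Function.Injective (Sum.elim fwd bwd))
    (hfs : ∀ i, src (fwd i) = wv i) (hft : ∀ i, tgt (fwd i) = bv i)
    (hbs : ∀ i, src (bwd i) = wv (i + 1)) (hbt : ∀ i, tgt (bwd i) = bv i)
    (m : ℕ) (p q : Fin m → ℝ) :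
    NGraph src tgt Finset.univ p q =
      ∑ E' ∈ (Finset.image fwd Finset.univ).powerset.erase ∅,
        (-1 : ℝ) ^ (E'.card - 1) * NGraph src tgt (Finset.univ \ E') p q := by
  classical
  set F : Finset E := Finset.image fwd Finset.univ with hF
  simp only [NGraph, Finset.mul_sum]
  conv_rhs => rw [Finset.sum_comm]
  refine Finset.sum_congr rfl fun ψw _ => ?_
  conv_rhs => rw [Finset.sum_comm]
  refine Finset.sum_congr rfl fun ψb _ => ?_
  -- the violated-edge set
  set V : Finset E := Finset.univ.filter (fun e => ¬ ψw (src e) ≤ ψb (tgt e)) with hVdef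
  have hcond : ∀ E' : Finset E,
      (∀ e ∈ Finset.univ \ E', ψw (src e) ≤ ψb (tgt e)) ↔ V ⊆ E' := by
    intro E'
    constructor
    · intro h e he
      rw [hVdef, Finset.mem_filter] at he
      by_contra hnot
      exact he.2 (h e (Finset.mem_sdiff.2 ⟨Finset.mem_univ _, hnot⟩))
    · intro h e he
      rw [Finset.mem_sdiff] at he
      by_contra hnot
      exact he.2 (h (by rw [hVdef, Finset.mem_filter]; exact ⟨Finset.mem_univ _, hnot⟩))
  have hfull : (∀ e ∈ (Finset.univ : Finset E), ψw (src e) ≤ ψb (tgt e)) ↔ V = ∅ := by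
    rw [hVdef, Finset.filter_eq_empty_iff]
    simp
  have hne : ¬(V ⊆ F ∧ F ⊆ V) := by
    rintro ⟨hVF, hFV⟩
    have hfviol : ∀ i, ψb (bv i) < ψw (wv i) := by
      intro i
      have : fwd i ∈ V := hFV (Finset.mem_image_of_mem fwd (Finset.mem_univ i))
      rw [hVdef, Finset.mem_filter] at this
      rw [← hfs i, ← hft i]
      exact lt_of_not_ge this.2
    have hbok : ∀ i, ψw (wv (i + 1)) ≤ ψb (bv i) := by
      intro i
      have hnotF : bwd i ∉ F := by
        rw [hF]
        simp only [Finset.mem_image, Finset.mem_univ, true_and]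
        rintro ⟨j, hj⟩
        have := hinj (a₁ := Sum.inl j) (a₂ := Sum.inr i) (by simpa using hj)
        simp at this
      have hnotV : bwd i ∉ V := fun h => hnotF (hVF h)
      rw [hVdef, Finset.mem_filter] at hnotV
      push_neg at hnotV
      rw [← hbs i, ← hbt i]
      exact hnotV (Finset.mem_univ _)
    have hdec : ∀ i : Fin l, ψw (wv (i + 1)) < ψw (wv i) :=
      fun i => lt_of_le_of_lt (hbok i) (hfviol i)
    obtain ⟨i₀, -, hmin⟩ := Finset.exists_min_image Finset.univ (fun i => ψw (wv i))
      ⟨⟨0, Nat.pos_of_ne_zero (NeZero.ne l)⟩, Finset.mem_univ _⟩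
    exact absurd (hmin (i₀ + 1) (Finset.mem_univ _)) (not_le.2 (hdec i₀))
  have := key_sum F V hne ((∏ w : W, p (ψw w)) * ∏ b : B, q (ψb b))
  simp only [hcond, hfull]
  rw [← this]
end

section
/- The free cumulant R_{l+1} of the multirectangular diagram λ(p,q) satisfies R_{l+1}(λ(p,q)) = Σ_{π ∈ NC(l)} (−1)^{|π|+1} N^π(p,q), where the sum runs over non-crossing partitions π of {1,...,l}, |π| is the number of blocks, and N^π = N(M^{σ_π, σ_π⁻¹(1...l)}) is the power series associated to the bicolored map of the minimal factorization determined by π. -/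
/-!
The sum defining `R_{l+1}` is reindexed along `τ ↦ π`, the partition of `{1,…,l}` into the cycles
of `τ`, with inverse `π ↦ σ_π`. This is a bijection from the minimal factorizations
`c(τ) + c(τ⁻¹ ρ) = l + 1` of the long cycle `ρ = (1 … l)` onto `NC(l)`, because `τ` is minimal
iff its cycles are non-crossing and `τ` runs through each of them in increasing cyclic order.

That equivalence is proved by induction on `2 l - c(τ)`. Both sides are unchanged when a step
`y ↦ y + 1` of `τ` is cut out of its cycle (which raises `c(τ)` and lowers `c(τ⁻¹ ρ)` by one),
and when a fixed point of `τ` is rotated to the end and deleted. If `τ` has neither fixed points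
nor steps `y ↦ y + 1`, then neither has `τ⁻¹ ρ`, so all cycles of both have length at least two
and `c(τ) + c(τ⁻¹ ρ) ≤ l`; on the other side, a non-crossing cyclically ordered `τ` without fixed
points always has such a step, namely its shortest one.
-/

open Equiv Equiv.Perm
open Fin.NatCast

namespace NoncrossingFactorization

section CyclicDist

variable {l : ℕ}

def cyclicDist (a b : Fin l) : ℕ := (b - a).val

theorem cyclicDist_lt (a b : Fin l) : cyclicDist a b < l := (b - a).isLt

theorem cyclicDist_eq (a b : Fin l) :
    cyclicDist a b = if a.val ≤ b.val then b.val - a.val else l - (a.val - b.val) := by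
  have ha := a.isLt
  rw [cyclicDist, Fin.sub_def]
  simp only
  split
  · rw [show l - a.val + b.val = (b.val - a.val) + l by omega, Nat.add_mod_right,
      Nat.mod_eq_of_lt (by omega)]
  · rw [Nat.mod_eq_of_lt (by omega)]; omega

theorem cyclicDist_add_cyclicDist {a b : Fin l} (h : a ≠ b) :
    cyclicDist a b + cyclicDist b a = l := by
  have := cyclicDist_eq a b; have := cyclicDist_eq b a
  have := Fin.val_ne_of_ne h
  split_ifs at * <;> omega

@[simp]
theorem cyclicDist_self (a : Fin l) : cyclicDist a a = 0 := by simp [cyclicDist, Fin.sub_def]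

variable [NeZero l]

theorem cyclicDist_eq_zero_iff {a b : Fin l} : cyclicDist a b = 0 ↔ a = b := by
  rw [cyclicDist, Fin.val_eq_zero_iff, sub_eq_zero, eq_comm]

theorem cyclicDist_pos {a b : Fin l} (h : b ≠ a) : 0 < cyclicDist a b :=
  Nat.pos_of_ne_zero fun h' => h (cyclicDist_eq_zero_iff.mp h').symm

@[simp]
theorem add_cyclicDist (a b : Fin l) : a + ((cyclicDist a b : ℕ) : Fin l) = b := by
  simp [cyclicDist]

@[simp]
theorem cyclicDist_add_natCast (a : Fin l) (t : ℕ) : cyclicDist a (a + (t : Fin l)) = t % l := by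
  simp only [cyclicDist, add_sub_cancel_left, Fin.val_natCast]

@[simp]
theorem cyclicDist_add_add (a b k : Fin l) : cyclicDist (a + k) (b + k) = cyclicDist a b := by
  simp only [cyclicDist, add_sub_add_right_eq_sub]

@[simp]
theorem cyclicDist_sub_sub (a b k : Fin l) : cyclicDist (a - k) (b - k) = cyclicDist a b := by
  simp only [cyclicDist, sub_sub_sub_cancel_right]

theorem cyclicDist_inj {a b c : Fin l} : cyclicDist a b = cyclicDist a c ↔ b = c :=
  ⟨fun h => by rw [← add_cyclicDist a b, h, add_cyclicDist], congrArg _⟩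

theorem eq_add_one_of_cyclicDist_eq_one {a b : Fin l} (h : cyclicDist a b = 1) : b = a + 1 := by
  simpa [h] using (add_cyclicDist a b).symm

theorem cyclicDist_add_one {a : Fin l} (h : a + 1 ≠ a) : cyclicDist a (a + 1) = 1 := by
  have hl : 1 < l := by
    by_contra! hl
    obtain rfl : l = 1 := le_antisymm hl (Nat.one_le_iff_ne_zero.mpr (NeZero.ne l))
    exact h (Subsingleton.elim _ _)
  simpa [Nat.mod_eq_of_lt hl] using cyclicDist_add_natCast a 1

theorem add_one_ne_self (hl : 1 < l) (a : Fin l) : a + 1 ≠ a := by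
  intro h
  simpa [h, Nat.mod_eq_of_lt hl] using cyclicDist_add_natCast a 1

theorem cyclicDist_eq_sub {a x b : Fin l} (h : cyclicDist a x ≤ cyclicDist a b) :
    cyclicDist x b = cyclicDist a b - cyclicDist a x := by
  obtain ⟨u, hu⟩ := Nat.exists_eq_add_of_le h
  have hb := cyclicDist_lt a b
  have hxb : x + (u : Fin l) = b := by
    rw [← add_cyclicDist a x, add_assoc, ← Nat.cast_add, ← hu, add_cyclicDist]
  rw [hu, Nat.add_sub_cancel_left, ← hxb, cyclicDist_add_natCast, Nat.mod_eq_of_lt (by omega)]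

theorem cyclicDist_add_one_right {a y : Fin l} (h : y + 1 ≠ a) :
    cyclicDist a (y + 1) = cyclicDist a y + 1 := by
  have hy : y + 1 = a + ((cyclicDist a y + 1 : ℕ) : Fin l) := by
    rw [Nat.cast_add, Nat.cast_one, ← add_assoc, add_cyclicDist]
  rcases Nat.lt_or_ge (cyclicDist a y + 1) l with hlt | hge
  · rw [hy, cyclicDist_add_natCast, Nat.mod_eq_of_lt hlt]
  · have hl : cyclicDist a y + 1 = l := le_antisymm (cyclicDist_lt a y) hge
    exact absurd (by rw [hy, hl, Fin.natCast_self, add_zero]) h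

theorem cyclicDist_add_one_left {x y : Fin l} (hxy : x ≠ y) (hy : y + 1 ≠ y) :
    cyclicDist (y + 1) x + 1 = cyclicDist y x := by
  have h1 := cyclicDist_add_one hy
  have h2 := cyclicDist_pos hxy
  have := cyclicDist_eq_sub (a := y) (x := y + 1) (b := x) (by omega)
  omega

theorem cyclicDist_add_one_self (y : Fin l) : cyclicDist (y + 1) y = l - 1 := by
  have hl : 0 < l := Nat.pos_of_ne_zero (NeZero.ne l)
  have hy' : y + 1 + ((l - 1 : ℕ) : Fin l) = y := by
    rw [add_assoc, ← Nat.cast_one, ← Nat.cast_add, Nat.add_sub_cancel' hl, Fin.natCast_self,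
      add_zero]
  rw [← congrArg (cyclicDist (y + 1)) hy', cyclicDist_add_natCast, Nat.mod_eq_of_lt (by omega)]

end CyclicDist

section CycleCount

theorem sameCycle_self_apply {α : Type*} (τ : Perm α) (x : α) : τ.SameCycle x (τ x) :=
  ⟨1, rfl⟩

theorem card_quotient_eq_add_one {α β : Type*} [Finite α] (R : Setoid α) (S : Setoid β)
    (z : α) (f : β → α) (hf : ∀ b, f b ≠ z) (hz : ∀ a, R.r z a → a = z)
    (hfr : ∀ a b, S.r a b ↔ R.r (f a) (f b)) (hsurj : ∀ a, a ≠ z → ∃ b, R.r (f b) a) :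
    Nat.card (Quotient R) = Nat.card (Quotient S) + 1 := by
  classical
  have e : Quotient S ≃ {q : Quotient R // q ≠ Quotient.mk R z} := by
    refine Equiv.ofBijective
      (fun q => ⟨Quotient.lift (fun b => Quotient.mk R (f b))
        (fun a b hab => Quotient.sound ((hfr a b).mp hab)) q, ?_⟩) ⟨?_, ?_⟩
    · induction q using Quotient.inductionOn with
      | h b => exact fun hq => hf b (hz _ (Setoid.symm (Quotient.exact hq)))
    · intro q₁ q₂ h
      induction q₁ using Quotient.inductionOn
      induction q₂ using Quotient.inductionOn
      exact Quotient.sound ((hfr _ _).mpr (Quotient.exact (congrArg Subtype.val h)))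
    · rintro ⟨q, hq⟩
      induction q using Quotient.inductionOn with
      | h a =>
        obtain ⟨b, hb⟩ := hsurj a (fun h => hq (h ▸ rfl))
        exact ⟨Quotient.mk S b, Subtype.ext (Quotient.sound hb)⟩
  rw [← Nat.card_congr (Equiv.optionSubtypeNe (Quotient.mk R z)), Finite.card_option,
    Nat.card_congr e]

theorem cycleCount_one {l : ℕ} : cycleCount (1 : Perm (Fin l)) = l := by
  have hmk : Function.Bijective (Quotient.mk (cycleSetoid (1 : Perm (Fin l)))) :=
    ⟨fun _ _ h => sameCycle_one.mp (Quotient.exact h), Quotient.mk_surjective⟩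
  rw [cycleCount, ← Nat.card_congr (Equiv.ofBijective _ hmk), Nat.card_eq_fintype_card,
    Fintype.card_fin]

theorem cycleCount_conj {l : ℕ} (g τ : Perm (Fin l)) :
    cycleCount (g * τ * g⁻¹) = cycleCount τ :=
  Nat.card_congr <| Quotient.congr g⁻¹ fun _ _ => sameCycle_conj

theorem cycleCount_inv {l : ℕ} (τ : Perm (Fin l)) : cycleCount τ⁻¹ = cycleCount τ :=
  Nat.card_congr <| Quotient.congr (Equiv.refl _) fun _ _ => sameCycle_inv

theorem cycleCount_le {l : ℕ} (τ : Perm (Fin l)) : cycleCount τ ≤ l := by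
  simpa [cycleCount] using
    Nat.card_le_card_of_surjective _ (Quotient.mk_surjective (s := cycleSetoid τ))

theorem two_mul_cycleCount_le {l : ℕ} {τ : Perm (Fin l)} (hτ : ∀ x, τ x ≠ x) :
    2 * cycleCount τ ≤ l := by
  let Q := Quotient (cycleSetoid τ)
  have hsc (q : Q) : Quotient.mk (cycleSetoid τ) (τ q.out) = q := by
    conv_rhs => rw [← q.out_eq]
    exact Quotient.sound (sameCycle_self_apply τ q.out).symm
  let f : Q ⊕ Q → Fin l := Sum.elim (fun q => q.out) (fun q => τ q.out)
  have hf : Function.Injective f := by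
    rintro (q₁ | q₁) (q₂ | q₂) h <;> simp only [f, Sum.elim_inl, Sum.elim_inr] at h
    · rw [Quotient.out_inj.mp h]
    · obtain rfl : q₁ = q₂ := by rw [← q₁.out_eq, h, hsc]
      exact absurd h.symm (hτ _)
    · obtain rfl : q₁ = q₂ := by rw [← hsc q₁, h, q₂.out_eq]
      exact absurd h (hτ _)
    · rw [Quotient.out_inj.mp (τ.injective h)]
  simpa [cycleCount, two_mul, Nat.card_sum] using Nat.card_le_card_of_injective f hf

theorem sameCycle_finRotate {l : ℕ} [NeZero l] (a b : Fin l) : (finRotate l).SameCycle a b := by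
  have hpow (k : ℕ) (x : Fin l) : (finRotate l ^ k) x = x + k := by
    induction k with
    | zero => simp
    | succ k ih => rw [pow_succ', mul_apply, ih, finRotate_apply, Nat.cast_succ, add_assoc]
  exact ⟨cyclicDist a b, by rw [zpow_natCast, hpow, add_cyclicDist]⟩

theorem cycleCount_finRotate {l : ℕ} [NeZero l] : cycleCount (finRotate l) = 1 :=
  Nat.card_eq_one_iff_unique.mpr
    ⟨⟨fun q₁ q₂ => Quotient.inductionOn₂ q₁ q₂ fun a b =>
      Quotient.sound (sameCycle_finRotate a b)⟩, ⟨Quotient.mk _ 0⟩⟩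

end CycleCount

theorem sameCycle_of_forall_sameCycle_apply {α : Type*} [Finite α] {f g : Perm α}
    (hfg : ∀ x, f.SameCycle x (g x)) {a b : α} (h : g.SameCycle a b) : f.SameCycle a b := by
  obtain ⟨k, rfl⟩ := h.exists_nat_pow_eq
  clear h
  induction k with
  | zero => exact SameCycle.rfl
  | succ k ih => rw [pow_succ', mul_apply]; exact ih.trans (hfg _)

theorem eq_or_eq_of_sameCycle_of_apply_apply_eq {α : Type*} [Finite α] {τ : Perm α} {a b : α}
    (ha : τ (τ a) = a) (h : τ.SameCycle a b) : b = a ∨ b = τ a := by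
  obtain ⟨k, rfl⟩ := h.exists_nat_pow_eq
  clear h
  induction k with
  | zero => exact Or.inl rfl
  | succ k ih =>
    rw [pow_succ', mul_apply]
    rcases ih with h | h <;> rw [h]
    exacts [Or.inr rfl, Or.inl ha]

section SplitOff

variable {α : Type*} [DecidableEq α] {τ : Perm α} {y : α}

@[simp]
theorem mul_swap_apply_self : (τ * swap y (τ y)) y = τ (τ y) := by simp

@[simp]
theorem mul_swap_apply_apply : (τ * swap y (τ y)) (τ y) = τ y := by simp

theorem mul_swap_apply_of_ne {x : α} (hx : x ≠ y) (hx' : x ≠ τ y) :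
    (τ * swap y (τ y)) x = τ x := by
  simp [swap_apply_of_ne_of_ne hx hx']

theorem sameCycle_of_mul_swap [Finite α] {a b : α} (h : (τ * swap y (τ y)).SameCycle a b) :
    τ.SameCycle a b := by
  refine sameCycle_of_forall_sameCycle_apply (fun x => ?_) h
  rw [mul_apply, sameCycle_apply_right]
  rcases eq_or_ne x y with rfl | hy
  · simpa using sameCycle_self_apply τ (τ x)
  rcases eq_or_ne x (τ y) with rfl | hy'
  · simpa using (sameCycle_self_apply τ y).symm
  · rw [swap_apply_of_ne_of_ne hy hy']

theorem sameCycle_mul_swap_of_sameCycle [Finite α] (hy : τ y ≠ y) {a b : α} (ha : a ≠ τ y)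
    (hb : b ≠ τ y) (h : τ.SameCycle a b) : (τ * swap y (τ y)).SameCycle a b := by
  obtain ⟨k, rfl⟩ := h.exists_nat_pow_eq
  suffices ∀ k : ℕ, ((τ ^ k) a ≠ τ y → (τ * swap y (τ y)).SameCycle a ((τ ^ k) a)) ∧
      ((τ ^ k) a = τ y → (τ * swap y (τ y)).SameCycle a y) from (this k).1 hb
  intro k
  induction k with
  | zero => exact ⟨fun _ => SameCycle.rfl, fun h => absurd h ha⟩
  | succ k ih =>
    rw [pow_succ', mul_apply]
    rcases eq_or_ne ((τ ^ k) a) (τ y) with hk | hk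
    · refine ⟨fun _ => ?_, fun h => (hy ((τ.injective h).symm.trans hk).symm).elim⟩
      rw [hk, ← mul_swap_apply_self]
      exact (ih.2 hk).trans (sameCycle_self_apply _ _)
    rcases eq_or_ne ((τ ^ k) a) y with hk' | hk'
    · exact ⟨fun h => absurd (by rw [hk']) h, fun _ => hk' ▸ ih.1 hk⟩
    · refine ⟨fun _ => ?_, fun h => absurd (τ.injective (h.trans rfl)) hk'⟩
      rw [← mul_swap_apply_of_ne hk' hk]
      exact (ih.1 hk).trans (sameCycle_self_apply _ _)

theorem sameCycle_mul_swap_iff [Finite α] (hy : τ y ≠ y) {a b : α} (ha : a ≠ τ y)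
    (hb : b ≠ τ y) : (τ * swap y (τ y)).SameCycle a b ↔ τ.SameCycle a b :=
  ⟨sameCycle_of_mul_swap, sameCycle_mul_swap_of_sameCycle hy ha hb⟩

theorem sameCycle_mul_swap_apply_iff {a : α} :
    (τ * swap y (τ y)).SameCycle (τ y) a ↔ a = τ y :=
  ⟨fun h => (h.eq_of_left mul_swap_apply_apply).symm, fun h => h ▸ SameCycle.rfl⟩

theorem cycleCount_mul_swap {l : ℕ} {τ : Perm (Fin l)} {y : Fin l} (hy : τ y ≠ y) :
    cycleCount (τ * swap y (τ y)) = cycleCount τ + 1 := by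
  -- the orbits of `τ * swap y (τ y)` are those of `τ`, with `τ y` split off as a fixed point
  let f : Fin l → Fin l := fun a => if a = τ y then y else a
  have hf (a : Fin l) : f a ≠ τ y := by
    unfold f; split_ifs with h
    exacts [hy.symm, h]
  have hfa (a : Fin l) : τ.SameCycle (f a) a := by
    unfold f; split_ifs with h
    exacts [h ▸ sameCycle_self_apply τ y, SameCycle.rfl]
  refine card_quotient_eq_add_one _ (cycleSetoid τ) (τ y) f hf
    (fun a => sameCycle_mul_swap_apply_iff.mp) (fun a b => ?_) (fun a ha => ⟨a, ?_⟩)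
  · change τ.SameCycle a b ↔ (τ * swap y (τ y)).SameCycle (f a) (f b)
    rw [sameCycle_mul_swap_iff hy (hf a) (hf b)]
    exact ⟨fun h => (hfa a).trans (h.trans (hfa b).symm),
      fun h => (hfa a).symm.trans (h.trans (hfa b))⟩
  · change (τ * swap y (τ y)).SameCycle (f a) a
    simp only [f, if_neg ha, SameCycle.rfl]

theorem cycleCount_swap_mul {l : ℕ} {σ : Perm (Fin l)} {a b : Fin l} (hσ : σ a = a)
    (hab : b ≠ a) :
    cycleCount σ = cycleCount (swap a b * σ) + 1 := by
  have h1 : (swap a b * σ)⁻¹ b = a := by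
    rw [mul_inv_rev, mul_apply, swap_inv, swap_apply_right, inv_eq_iff_eq, hσ]
  have h2 := cycleCount_mul_swap (τ := (swap a b * σ)⁻¹) (y := b) (by rw [h1]; exact hab.symm)
  have h3 : (swap a b * σ)⁻¹ * swap b a = σ⁻¹ := by
    rw [mul_inv_rev, swap_inv, swap_comm a b, mul_assoc, swap_mul_self, mul_one]
  rwa [h1, h3, cycleCount_inv, cycleCount_inv] at h2

end SplitOff

section DropLast

variable {n : ℕ} {τ : Perm (Fin (n + 1))}

theorem inv_apply_last (hτ : τ (Fin.last n) = Fin.last n) :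
    τ⁻¹ (Fin.last n) = Fin.last n := by
  rw [inv_eq_iff_eq, hτ]

theorem apply_castSucc_ne_last (hτ : τ (Fin.last n) = Fin.last n) (x : Fin n) :
    τ x.castSucc ≠ Fin.last n :=
  fun h => (Fin.castSucc_lt_last x).ne (τ.injective (h.trans hτ.symm))

def dropLast (τ : Perm (Fin (n + 1))) (hτ : τ (Fin.last n) = Fin.last n) : Perm (Fin n) where
  toFun x := (τ x.castSucc).castPred (apply_castSucc_ne_last hτ x)
  invFun x := (τ⁻¹ x.castSucc).castPred (apply_castSucc_ne_last (inv_apply_last hτ) x)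
  left_inv x := by simp
  right_inv x := by simp

@[simp]
theorem castSucc_dropLast_apply (hτ : τ (Fin.last n) = Fin.last n) (x : Fin n) :
    (dropLast τ hτ x).castSucc = τ x.castSucc := by
  simp [dropLast]

theorem dropLast_inv (hτ : τ (Fin.last n) = Fin.last n) :
    (dropLast τ hτ)⁻¹ = dropLast τ⁻¹ (inv_apply_last hτ) :=
  rfl

theorem sameCycle_dropLast_iff (hτ : τ (Fin.last n) = Fin.last n) {a b : Fin n} :
    (dropLast τ hτ).SameCycle a b ↔ τ.SameCycle a.castSucc b.castSucc := by
  have hpow (k : ℕ) (x : Fin n) : ((dropLast τ hτ ^ k) x).castSucc = (τ ^ k) x.castSucc := by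
    induction k with
    | zero => rfl
    | succ k ih => rw [pow_succ', pow_succ', mul_apply, mul_apply, castSucc_dropLast_apply, ih]
  constructor
  · intro h
    obtain ⟨k, rfl⟩ := h.exists_nat_pow_eq
    exact ⟨k, by rw [zpow_natCast, ← hpow]⟩
  · intro h
    obtain ⟨k, hk⟩ := h.exists_nat_pow_eq
    exact ⟨k, Fin.castSucc_injective n (by rw [zpow_natCast, hpow, hk])⟩

theorem cycleCount_eq_cycleCount_dropLast_add_one (hτ : τ (Fin.last n) = Fin.last n) :
    cycleCount τ = cycleCount (dropLast τ hτ) + 1 :=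
  card_quotient_eq_add_one _ _ (Fin.last n) Fin.castSucc (fun b => (Fin.castSucc_lt_last b).ne)
    (fun _ h => (h.eq_of_left hτ).symm) (fun _ _ => sameCycle_dropLast_iff hτ)
    (fun a ha => ⟨a.castPred ha, by rw [Fin.castSucc_castPred]⟩)

/-- Deleting a fixed point `Fin.last` of `τ` corresponds, on the complementary factor
`τ⁻¹ * finRotate`, to splitting `Fin.last` off its cycle and then deleting it. -/
theorem dropLast_inv_mul_finRotate {m : ℕ} {τ : Perm (Fin (m + 2))}
    (hτ : τ (Fin.last (m + 1)) = Fin.last (m + 1)) (hfix : (τ⁻¹ * finRotate (m + 2) *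
      swap (Fin.last m).castSucc (Fin.last (m + 1))) (Fin.last (m + 1)) = Fin.last (m + 1)) :
    (dropLast τ hτ)⁻¹ * finRotate (m + 1) = dropLast _ hfix := by
  ext x : 1
  apply Fin.castSucc_injective
  rw [castSucc_dropLast_apply, mul_apply, mul_apply, dropLast_inv, castSucc_dropLast_apply,
    mul_apply]
  congr 1
  rcases eq_or_ne x (Fin.last m) with rfl | hx
  · ext; simp
  · have hx' : x.castSucc ≠ (Fin.last m).castSucc := fun h => hx (Fin.castSucc_injective _ h)
    rw [swap_apply_of_ne_of_ne hx' (Fin.castSucc_lt_last x).ne]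
    ext; simp [Fin.val_add_one_of_lt (Fin.val_lt_last hx)]

end DropLast

section Crossing

variable {l : ℕ}

/-- `τ = σ_π` for the partition `π` of `Fin l` into the cycles of `τ`. -/
def IsCyclicallyOrdered (τ : Perm (Fin l)) : Prop :=
  ∀ i j, τ.SameCycle i j → j ≠ i → cyclicDist i (τ i) ≤ cyclicDist i j

def IsCrossingAt (π : Setoid (Fin l)) (a b c d : Fin l) : Prop :=
  0 < cyclicDist a b ∧ cyclicDist a b < cyclicDist a c ∧ cyclicDist a c < cyclicDist a d ∧
    π.r a c ∧ π.r b d ∧ ¬ π.r a b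

def HasCyclicCrossing (π : Setoid (Fin l)) : Prop :=
  ∃ a b c d, IsCrossingAt π a b c d

variable {π : Setoid (Fin l)} {a b c d : Fin l}

namespace IsCrossingAt

theorem ne_bd (h : IsCrossingAt π a b c d) : b ≠ d := by
  rintro rfl; exact (h.2.1.trans h.2.2.1).false

variable [NeZero l]

theorem ne_ab (h : IsCrossingAt π a b c d) : a ≠ b :=
  fun hab => h.1.ne' (cyclicDist_eq_zero_iff.mpr hab)

theorem ne_ac (h : IsCrossingAt π a b c d) : a ≠ c :=
  fun hac => (h.1.trans h.2.1).ne' (cyclicDist_eq_zero_iff.mpr hac)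

theorem ne_ad (h : IsCrossingAt π a b c d) : a ≠ d :=
  fun had => (h.1.trans (h.2.1.trans h.2.2.1)).ne' (cyclicDist_eq_zero_iff.mpr had)

theorem rotate (h : IsCrossingAt π a b c d) : IsCrossingAt π b c d a := by
  have hba := cyclicDist_add_cyclicDist h.ne_ab
  obtain ⟨h1, h2, h3, hac, hbd, hab⟩ := h
  have hbc := cyclicDist_eq_sub (a := a) (x := b) (b := c) (by omega)
  have hbd' := cyclicDist_eq_sub (a := a) (x := b) (b := d) (by omega)
  have := cyclicDist_lt a d
  refine ⟨by omega, by omega, by omega, hbd, π.symm hac, fun hbc => hab ?_⟩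
  exact π.trans hac (π.symm hbc)

end IsCrossingAt

end Crossing

section Rotation

variable {l : ℕ} [NeZero l] (k : Fin l)

def conjAddRight (τ : Perm (Fin l)) : Perm (Fin l) :=
  (Equiv.addRight k)⁻¹ * τ * Equiv.addRight k

@[simp]
theorem conjAddRight_apply (τ : Perm (Fin l)) (x : Fin l) :
    conjAddRight k τ x = τ (x + k) - k := by
  simp [conjAddRight, sub_eq_add_neg]

theorem sameCycle_conjAddRight_iff {τ : Perm (Fin l)} {x y : Fin l} :
    (conjAddRight k τ).SameCycle x y ↔ τ.SameCycle (x + k) (y + k) := by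
  rw [conjAddRight, ← inv_inv (Equiv.addRight k), inv_inv, sameCycle_conj]
  simp

theorem cycleCount_conjAddRight (τ : Perm (Fin l)) :
    cycleCount (conjAddRight k τ) = cycleCount τ := by
  simpa only [conjAddRight, inv_inv] using cycleCount_conj (Equiv.addRight k)⁻¹ τ

theorem conjAddRight_inv_mul_finRotate (τ : Perm (Fin l)) :
    (conjAddRight k τ)⁻¹ * finRotate l = conjAddRight k (τ⁻¹ * finRotate l) := by
  have : finRotate l * Equiv.addRight k = Equiv.addRight k * finRotate l := by
    ext x : 1; simp [add_right_comm]
  simp only [conjAddRight, mul_inv_rev, inv_inv, mul_assoc, this]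

theorem isCyclicallyOrdered_conjAddRight_iff {τ : Perm (Fin l)} :
    IsCyclicallyOrdered (conjAddRight k τ) ↔ IsCyclicallyOrdered τ := by
  have hd (i j : Fin l) : cyclicDist i j = cyclicDist (i + k) (j + k) :=
    (cyclicDist_add_add ..).symm
  simp only [IsCyclicallyOrdered, sameCycle_conjAddRight_iff, conjAddRight_apply, hd _ (_ - k),
    sub_add_cancel, ne_eq]
  constructor
  · intro h i j hij hne
    simpa using h (i - k) (j - k) (by simpa using hij) (by simpa using hne)
  · intro h i j hij hne
    rw [hd i j]
    exact h _ _ hij (by simpa using hne)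

theorem isCrossingAt_comap_add_right_iff {π : Setoid (Fin l)} {a b c d : Fin l} :
    IsCrossingAt (π.comap (· + k)) a b c d ↔
      IsCrossingAt π (a + k) (b + k) (c + k) (d + k) := by
  simp [IsCrossingAt, Setoid.comap_rel]

theorem hasCyclicCrossing_comap_add_right_iff {π : Setoid (Fin l)} :
    HasCyclicCrossing (π.comap (· + k)) ↔ HasCyclicCrossing π := by
  refine ⟨fun ⟨a, b, c, d, h⟩ => ⟨_, _, _, _, (isCrossingAt_comap_add_right_iff k).mp h⟩,
    fun ⟨a, b, c, d, h⟩ => ⟨a - k, b - k, c - k, d - k, ?_⟩⟩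
  simpa [isCrossingAt_comap_add_right_iff] using h

theorem cycleSetoid_conjAddRight (τ : Perm (Fin l)) :
    cycleSetoid (conjAddRight k τ) = (cycleSetoid τ).comap (· + k) :=
  Setoid.ext fun _ _ => sameCycle_conjAddRight_iff k

end Rotation

section DropLastInvariance

variable {n : ℕ}

theorem cyclicDist_castSucc_lt_castSucc_iff (a x y : Fin n) :
    cyclicDist a.castSucc x.castSucc < cyclicDist a.castSucc y.castSucc ↔
      cyclicDist a x < cyclicDist a y := by
  simp only [cyclicDist_eq, Fin.val_castSucc]
  have := x.isLt; have := y.isLt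
  split_ifs <;> omega

theorem cyclicDist_castSucc_le_castSucc_iff (a x y : Fin n) :
    cyclicDist a.castSucc x.castSucc ≤ cyclicDist a.castSucc y.castSucc ↔
      cyclicDist a x ≤ cyclicDist a y := by
  simp only [← not_lt, cyclicDist_castSucc_lt_castSucc_iff]

theorem isCrossingAt_comap_castSucc_iff {π : Setoid (Fin (n + 1))} {a b c d : Fin n} :
    IsCrossingAt (π.comap Fin.castSucc) a b c d ↔
      IsCrossingAt π a.castSucc b.castSucc c.castSucc d.castSucc := by
  have h0 (x y : Fin n) := cyclicDist_castSucc_lt_castSucc_iff x x y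
  simp only [cyclicDist_self] at h0
  simp [IsCrossingAt, Setoid.comap_rel, cyclicDist_castSucc_lt_castSucc_iff, h0]

theorem hasCyclicCrossing_comap_castSucc_iff {π : Setoid (Fin (n + 1))}
    (hπ : ∀ a, π.r (Fin.last n) a → a = Fin.last n) :
    HasCyclicCrossing (π.comap Fin.castSucc) ↔ HasCyclicCrossing π := by
  refine ⟨fun ⟨a, b, c, d, h⟩ => ⟨_, _, _, _, isCrossingAt_comap_castSucc_iff.mp h⟩,
    fun ⟨a, b, c, d, h⟩ => ?_⟩
  have hne {x y : Fin (n + 1)} (hxy : π.r x y) (hne : x ≠ y) :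
      x ≠ Fin.last n ∧ y ≠ Fin.last n :=
    ⟨fun hx => hne (hx.trans (hπ y (hx ▸ hxy)).symm),
      fun hy => hne ((hπ x (hy ▸ π.symm hxy)).trans hy.symm)⟩
  obtain ⟨ha, hc⟩ := hne h.2.2.2.1 h.ne_ac
  obtain ⟨hb, hd⟩ := hne h.2.2.2.2.1 h.ne_bd
  refine ⟨a.castPred ha, b.castPred hb, c.castPred hc, d.castPred hd, ?_⟩
  simpa [isCrossingAt_comap_castSucc_iff] using h

theorem isCyclicallyOrdered_dropLast_iff {τ : Perm (Fin (n + 1))}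
    (hτ : τ (Fin.last n) = Fin.last n) :
    IsCyclicallyOrdered (dropLast τ hτ) ↔ IsCyclicallyOrdered τ := by
  constructor
  · intro h i j hij hji
    have hi : i ≠ Fin.last n := by rintro rfl; exact hji (hij.eq_of_left hτ).symm
    have hj : j ≠ Fin.last n := by rintro rfl; exact hji (hij.eq_of_right hτ).symm
    rw [← Fin.castSucc_castPred i hi, ← Fin.castSucc_castPred j hj] at hij hji ⊢
    rw [← castSucc_dropLast_apply hτ, cyclicDist_castSucc_le_castSucc_iff]
    exact h _ _ ((sameCycle_dropLast_iff hτ).mpr hij) (fun h' => hji (congrArg _ h'))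
  · intro h i j hij hji
    rw [← cyclicDist_castSucc_le_castSucc_iff, castSucc_dropLast_apply]
    exact h _ _ ((sameCycle_dropLast_iff hτ).mp hij) (fun h' => hji (Fin.castSucc_injective _ h'))

theorem cycleSetoid_dropLast {τ : Perm (Fin (n + 1))} (hτ : τ (Fin.last n) = Fin.last n) :
    cycleSetoid (dropLast τ hτ) = (cycleSetoid τ).comap Fin.castSucc :=
  Setoid.ext fun _ _ => sameCycle_dropLast_iff hτ

end DropLastInvariance

section SplitStep

variable {l : ℕ} [NeZero l] {τ : Perm (Fin l)} {y : Fin l}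

theorem IsCyclicallyOrdered.mul_swap (hz : τ y = y + 1) (hyz : y + 1 ≠ y)
    (hτ : IsCyclicallyOrdered τ) : IsCyclicallyOrdered (τ * swap y (τ y)) := by
  have hy : τ y ≠ y := hz ▸ hyz
  intro i j hij hji
  have hiz : i ≠ τ y := by
    rintro rfl; exact hji (sameCycle_mul_swap_apply_iff.mp hij)
  have hjz : j ≠ τ y := by
    rintro rfl; exact hiz (sameCycle_mul_swap_apply_iff.mp hij.symm)
  have hij' : τ.SameCycle i j := (sameCycle_mul_swap_iff hy hiz hjz).mp hij
  rcases eq_or_ne i y with rfl | hiy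
  · rw [mul_swap_apply_self]
    rcases eq_or_ne (τ (τ i)) i with he | he
    · rw [he, cyclicDist_self]; exact Nat.zero_le _
    · have h := hτ (τ i) j (sameCycle_apply_left.mpr hij') hjz
      rw [hz] at h he ⊢
      have e1 := cyclicDist_add_one_left he hyz
      have e2 := cyclicDist_add_one_left hji hyz
      omega
  · rw [mul_swap_apply_of_ne hiy hiz]
    exact hτ i j hij' hji

theorem IsCyclicallyOrdered.of_mul_swap (hz : τ y = y + 1) (hyz : y + 1 ≠ y)
    (hτ : IsCyclicallyOrdered (τ * swap y (τ y))) : IsCyclicallyOrdered τ := by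
  have hy : τ y ≠ y := hz ▸ hyz
  intro i j hij hji
  rcases eq_or_ne i y with rfl | hiy
  · rw [hz, cyclicDist_add_one hyz]
    exact cyclicDist_pos hji
  rcases eq_or_ne i (τ y) with rfl | hiz
  · rcases eq_or_ne j y with rfl | hjy
    · have := cyclicDist_lt (τ j) (τ (τ j))
      rw [hz, cyclicDist_add_one_self] at *
      omega
    rcases eq_or_ne (τ (τ y)) y with he | he
    · rcases eq_or_eq_of_sameCycle_of_apply_apply_eq he (sameCycle_apply_left.mp hij) with h | h
      exacts [absurd h hjy, absurd h hji]
    · have h := hτ y j ((sameCycle_mul_swap_iff hy hy.symm hji).mpr (sameCycle_apply_left.mp hij))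
        hjy
      rw [mul_swap_apply_self, hz] at h
      rw [hz] at he ⊢
      have e1 := cyclicDist_add_one_left he hyz
      have e2 := cyclicDist_add_one_left hjy hyz
      omega
  rcases eq_or_ne j (τ y) with rfl | hjz
  · have h := hτ i y ((sameCycle_mul_swap_iff hy hiz hy.symm).mpr (sameCycle_apply_right.mp hij))
      hiy.symm
    rw [mul_swap_apply_of_ne hiy hiz] at h
    rw [hz, cyclicDist_add_one_right (hz ▸ hiz.symm)]
    omega
  · have h := hτ i j ((sameCycle_mul_swap_iff hy hiz hjz).mpr hij) hji
    rwa [mul_swap_apply_of_ne hiy hiz] at h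

theorem hasCyclicCrossing_of_mul_swap (hy : τ y ≠ y)
    (h : HasCyclicCrossing (cycleSetoid (τ * swap y (τ y)))) :
    HasCyclicCrossing (cycleSetoid τ) := by
  obtain ⟨a, b, c, d, h⟩ := h
  have hne {x x' : Fin l} (hxx' : (τ * swap y (τ y)).SameCycle x x') (hne : x ≠ x') :
      x ≠ τ y ∧ x' ≠ τ y :=
    ⟨by rintro rfl; exact hne (sameCycle_mul_swap_apply_iff.mp hxx').symm,
      by rintro rfl; exact hne (sameCycle_mul_swap_apply_iff.mp hxx'.symm)⟩
  obtain ⟨ha, hc⟩ := hne h.2.2.2.1 h.ne_ac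
  obtain ⟨hb, hd⟩ := hne h.2.2.2.2.1 h.ne_bd
  obtain ⟨h1, h2, h3, hac, hbd, hab⟩ := h
  exact ⟨a, b, c, d, h1, h2, h3, (sameCycle_mul_swap_iff hy ha hc).mp hac,
    (sameCycle_mul_swap_iff hy hb hd).mp hbd,
    fun h => hab ((sameCycle_mul_swap_iff hy ha hb).mpr h)⟩

theorem IsCrossingAt.mul_swap_of_apply (hz : τ y = y + 1) (hyz : y + 1 ≠ y) {b c d : Fin l}
    (h : IsCrossingAt (cycleSetoid τ) (τ y) b c d) :
    IsCrossingAt (cycleSetoid (τ * swap y (τ y))) y b c d := by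
  have hy : τ y ≠ y := hz ▸ hyz
  have hyz' := sameCycle_self_apply τ y
  have hb := h.ne_ab; have hc := h.ne_ac; have hd := h.ne_ad
  obtain ⟨h1, h2, h3, hac, hbd, hab⟩ := h
  change τ.SameCycle _ _ at hac hbd
  change ¬ τ.SameCycle _ _ at hab
  have hby : b ≠ y := by rintro rfl; exact hab hyz'.symm
  have hcy : c ≠ y := by
    rintro rfl
    have := cyclicDist_lt (τ c) d
    rw [hz, cyclicDist_add_one_self] at *
    omega
  have hdy : d ≠ y := by rintro rfl; exact hab (hyz'.symm.trans hbd.symm)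
  have e1 := cyclicDist_add_one_left hby hyz
  have e2 := cyclicDist_add_one_left hcy hyz
  have e3 := cyclicDist_add_one_left hdy hyz
  rw [← hz] at e1 e2 e3
  refine ⟨by omega, by omega, by omega, ?_, ?_, ?_⟩
  · exact (sameCycle_mul_swap_iff hy hy.symm hc.symm).mpr (hyz'.trans hac)
  · exact (sameCycle_mul_swap_iff hy hb.symm hd.symm).mpr hbd
  · exact fun h => hab (hyz'.symm.trans ((sameCycle_mul_swap_iff hy hy.symm hb.symm).mp h))

theorem HasCyclicCrossing.mul_swap (hz : τ y = y + 1) (hyz : y + 1 ≠ y)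
    (h : HasCyclicCrossing (cycleSetoid τ)) :
    HasCyclicCrossing (cycleSetoid (τ * swap y (τ y))) := by
  have hy : τ y ≠ y := hz ▸ hyz
  obtain ⟨a, b, c, d, h⟩ := h
  rcases eq_or_ne a (τ y) with rfl | ha
  · exact ⟨_, _, _, _, h.mul_swap_of_apply hz hyz⟩
  rcases eq_or_ne b (τ y) with rfl | hb
  · exact ⟨_, _, _, _, h.rotate.mul_swap_of_apply hz hyz⟩
  rcases eq_or_ne c (τ y) with rfl | hc
  · exact ⟨_, _, _, _, h.rotate.rotate.mul_swap_of_apply hz hyz⟩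
  rcases eq_or_ne d (τ y) with rfl | hd
  · exact ⟨_, _, _, _, h.rotate.rotate.rotate.mul_swap_of_apply hz hyz⟩
  obtain ⟨h1, h2, h3, hac, hbd, hab⟩ := h
  exact ⟨a, b, c, d, h1, h2, h3, (sameCycle_mul_swap_iff hy ha hc).mpr hac,
    (sameCycle_mul_swap_iff hy hb hd).mpr hbd,
    fun h => hab ((sameCycle_mul_swap_iff hy ha hb).mp h)⟩

theorem isCyclicallyOrdered_mul_swap_iff (hz : τ y = y + 1) (hyz : y + 1 ≠ y) :
    IsCyclicallyOrdered (τ * swap y (τ y)) ↔ IsCyclicallyOrdered τ :=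
  ⟨.of_mul_swap hz hyz, .mul_swap hz hyz⟩

theorem hasCyclicCrossing_mul_swap_iff (hz : τ y = y + 1) (hyz : y + 1 ≠ y) :
    HasCyclicCrossing (cycleSetoid (τ * swap y (τ y))) ↔ HasCyclicCrossing (cycleSetoid τ) :=
  ⟨hasCyclicCrossing_of_mul_swap (hz ▸ hyz), .mul_swap hz hyz⟩

end SplitStep

section MinimalFactorization

variable {l : ℕ}

/-- The factorization `(1 … l) = τ · τ⁻¹ (1 … l)` is minimal: its bicolored map has the
maximal number `l + 1` of vertices. -/
def IsMinimalFactorization (τ : Perm (Fin l)) : Prop :=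
  cycleCount τ + cycleCount (τ⁻¹ * finRotate l) = l + 1

variable [NeZero l] {τ : Perm (Fin l)}

theorem not_isMinimalFactorization_of_forall_ne (hfix : ∀ x, τ x ≠ x)
    (hstep : ∀ x, τ x ≠ x + 1) : ¬ IsMinimalFactorization τ := by
  have hfix' (x : Fin l) : (τ⁻¹ * finRotate l) x ≠ x := by
    rw [mul_apply, finRotate_apply, Ne, inv_eq_iff_eq, eq_comm]
    exact hstep x
  have := two_mul_cycleCount_le hfix
  have := two_mul_cycleCount_le hfix'
  unfold IsMinimalFactorization
  omega

/-- The shortest step `i ↦ τ i` works: otherwise the block of `i + 1` would lie strictly inside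
it and contain a shorter step. -/
theorem exists_apply_eq_add_one (hτ : IsCyclicallyOrdered τ)
    (hnc : ¬ HasCyclicCrossing (cycleSetoid τ)) (hfix : ∀ x, τ x ≠ x) :
    ∃ y, τ y = y + 1 := by
  obtain ⟨i, -, hi⟩ := Finset.exists_min_image Finset.univ (fun i => cyclicDist i (τ i))
    Finset.univ_nonempty
  refine ⟨i, ?_⟩
  by_contra hne
  have hgap : 1 < cyclicDist i (τ i) := by
    have := cyclicDist_pos (hfix i)
    have : cyclicDist i (τ i) ≠ 1 := fun h => hne (eq_add_one_of_cyclicDist_eq_one h)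
    omega
  have hix : cyclicDist i (i + 1) = 1 := by
    have hl : 1 < l := hgap.trans (cyclicDist_lt i (τ i))
    simpa [Nat.mod_eq_of_lt hl] using cyclicDist_add_natCast i 1
  have hxi : ¬ τ.SameCycle i (i + 1) := fun h => by
    have := hτ i (i + 1) h (fun h' => by simp [h'] at hix)
    omega
  have hinside (w : Fin l) (hw : τ.SameCycle (i + 1) w) :
      cyclicDist i w < cyclicDist i (τ i) := by
    by_contra! hge
    have hwi : w ≠ τ i := by
      rintro rfl; exact hxi ((sameCycle_self_apply τ i).trans hw.symm)
    have hlt : cyclicDist i (τ i) < cyclicDist i w :=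
      lt_of_le_of_ne hge (mt cyclicDist_inj.mp hwi.symm)
    exact hnc ⟨i, i + 1, τ i, w, by omega, by omega, hlt, sameCycle_self_apply τ i, hw, hxi⟩
  have hx := hinside _ (sameCycle_self_apply τ (i + 1))
  have hxi' : τ (i + 1) ≠ i := fun h => hxi (h ▸ sameCycle_self_apply τ (i + 1)).symm
  have := cyclicDist_pos hxi'
  have := cyclicDist_eq_sub (a := i) (x := i + 1) (b := τ (i + 1)) (by omega)
  have := hi (i + 1) (Finset.mem_univ _)
  omega

theorem isMinimalFactorization_one : IsMinimalFactorization (1 : Perm (Fin l)) := by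
  rw [IsMinimalFactorization, inv_one, one_mul, cycleCount_one, cycleCount_finRotate]

theorem isMinimalFactorization_mul_swap_iff {y : Fin l} (hz : τ y = y + 1) (hyz : y + 1 ≠ y) :
    IsMinimalFactorization (τ * swap y (τ y)) ↔ IsMinimalFactorization τ := by
  have hy : τ y ≠ y := hz ▸ hyz
  have hfix : (τ⁻¹ * finRotate l) y = y := by
    rw [mul_apply, finRotate_apply, ← hz, inv_eq_iff_eq]
  have h1 := cycleCount_mul_swap hy
  have h2 := cycleCount_swap_mul hfix hy
  rw [← mul_assoc, ← swap_inv, ← mul_inv_rev] at h2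
  unfold IsMinimalFactorization
  omega

theorem isMinimalFactorization_conjAddRight_iff (k : Fin l) :
    IsMinimalFactorization (conjAddRight k τ) ↔ IsMinimalFactorization τ := by
  rw [IsMinimalFactorization, IsMinimalFactorization, conjAddRight_inv_mul_finRotate,
    cycleCount_conjAddRight, cycleCount_conjAddRight]

theorem isMinimalFactorization_dropLast_iff {m : ℕ} {τ : Perm (Fin (m + 2))}
    (hτ : τ (Fin.last (m + 1)) = Fin.last (m + 1)) :
    IsMinimalFactorization (dropLast τ hτ) ↔ IsMinimalFactorization τ := by
  set w : Fin (m + 2) := (Fin.last m).castSucc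
  have hw : (τ⁻¹ * finRotate (m + 2)) w = Fin.last (m + 1) := by
    rw [mul_apply, finRotate_apply, inv_eq_iff_eq, hτ]
    ext; simp [w]
  have hfix : (τ⁻¹ * finRotate (m + 2) * swap w (Fin.last (m + 1))) (Fin.last (m + 1)) =
      Fin.last (m + 1) := by
    rw [mul_apply, swap_apply_right, hw]
  have h1 := cycleCount_eq_cycleCount_dropLast_add_one hτ
  have h2 := cycleCount_mul_swap (τ := τ⁻¹ * finRotate (m + 2)) (y := w)
    (hw ▸ (Fin.castSucc_lt_last _).ne')
  rw [hw, cycleCount_eq_cycleCount_dropLast_add_one hfix, ← dropLast_inv_mul_finRotate hτ] at h2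
  unfold IsMinimalFactorization
  omega

end MinimalFactorization

theorem isMinimalFactorization_iff {l : ℕ} [NeZero l] (τ : Perm (Fin l)) :
    IsMinimalFactorization τ ↔
      IsCyclicallyOrdered τ ∧ ¬ HasCyclicCrossing (cycleSetoid τ) := by
  induction h : 2 * l - cycleCount τ using Nat.strong_induction_on generalizing l τ with
  | _ N ih =>
  have hc := cycleCount_le τ
  by_cases h1 : τ = 1
  · subst h1
    refine iff_of_true isMinimalFactorization_one
      ⟨fun i j hij hji => absurd (sameCycle_one.mp hij).symm hji, fun ⟨a, b, c, d, h⟩ => ?_⟩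
    exact h.ne_ac (sameCycle_one.mp h.2.2.2.1)
  have hl : 1 < l := by
    by_contra! hl
    obtain rfl : l = 1 := le_antisymm hl (Nat.one_le_iff_ne_zero.mpr (NeZero.ne l))
    exact h1 (Subsingleton.elim _ _)
  by_cases hstep : ∃ y, τ y = y + 1
  · obtain ⟨y, hz⟩ := hstep
    have hyz : y + 1 ≠ y := add_one_ne_self hl y
    have hc' := cycleCount_mul_swap (hz ▸ hyz : τ y ≠ y)
    have := cycleCount_le (τ * swap y (τ y))
    rw [← isMinimalFactorization_mul_swap_iff hz hyz, ih _ (by omega) _ rfl,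
      isCyclicallyOrdered_mul_swap_iff hz hyz, hasCyclicCrossing_mul_swap_iff hz hyz]
  by_cases hfix : ∃ y, τ y = y
  · obtain ⟨y, hy⟩ := hfix
    obtain ⟨m, rfl⟩ : ∃ m, l = m + 2 := ⟨l - 2, by omega⟩
    set τ' := conjAddRight (y - Fin.last (m + 1)) τ
    have hlast : τ' (Fin.last (m + 1)) = Fin.last (m + 1) := by
      simp [τ', hy]
    have hc' : cycleCount τ = cycleCount (dropLast τ' hlast) + 1 := by
      rw [← cycleCount_eq_cycleCount_dropLast_add_one, cycleCount_conjAddRight]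
    rw [← isMinimalFactorization_conjAddRight_iff (y - Fin.last (m + 1)),
      ← isMinimalFactorization_dropLast_iff hlast, ih _ (by omega) _ rfl,
      isCyclicallyOrdered_dropLast_iff, cycleSetoid_dropLast,
      hasCyclicCrossing_comap_castSucc_iff (fun a h => (h.eq_of_left hlast).symm),
      isCyclicallyOrdered_conjAddRight_iff, cycleSetoid_conjAddRight,
      hasCyclicCrossing_comap_add_right_iff]
  simp only [not_exists] at hstep hfix
  exact iff_of_false (not_isMinimalFactorization_of_forall_ne hfix hstep)
    fun ⟨hτ, hnc⟩ => let ⟨y, hy⟩ := exists_apply_eq_add_one hτ hnc hfix; hstep y hy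

section NextElem

variable {l : ℕ}

theorem IsCrossingAt.lt_of_le {π : Setoid (Fin l)} {a b c d : Fin l}
    (h : IsCrossingAt π a b c d) (hb : a ≤ b) (hc : a ≤ c) (hd : a ≤ d) :
    a < b ∧ b < c ∧ c < d := by
  obtain ⟨h1, h2, h3, -⟩ := h
  rw [Fin.le_def] at hb hc hd
  simp only [cyclicDist_eq, if_pos hb, if_pos hc, if_pos hd] at h1 h2 h3
  simp only [Fin.lt_def]
  omega

variable [NeZero l]

theorem nonCrossing_iff_not_hasCyclicCrossing (π : Setoid (Fin l)) :
    NonCrossing π ↔ ¬ HasCyclicCrossing π := by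
  refine not_congr ⟨fun ⟨a, b, c, d, hab, hbc, hcd, hac, hbd, hn⟩ => ⟨a, b, c, d, ?_⟩,
    fun ⟨a, b, c, d, h⟩ => ?_⟩
  · simp only [Fin.lt_def] at hab hbc hcd
    simp only [IsCrossingAt, cyclicDist_eq, if_pos hab.le, if_pos (hab.trans hbc).le,
      if_pos (hab.trans (hbc.trans hcd)).le]
    exact ⟨by omega, by omega, by omega, hac, hbd, hn⟩
  -- start the cyclic crossing at its smallest point
  have key {a b c d : Fin l} (h : IsCrossingAt π a b c d) (hb : a ≤ b) (hc : a ≤ c)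
      (hd : a ≤ d) :
      ∃ a b c d : Fin l, a < b ∧ b < c ∧ c < d ∧ π.r a c ∧ π.r b d ∧ ¬ π.r a b :=
    have ⟨h1, h2, h3⟩ := h.lt_of_le hb hc hd
    ⟨a, b, c, d, h1, h2, h3, h.2.2.2⟩
  by_cases ha : a ≤ b ∧ a ≤ c ∧ a ≤ d
  · exact key h ha.1 ha.2.1 ha.2.2
  by_cases hb : b ≤ c ∧ b ≤ d ∧ b ≤ a
  · exact key h.rotate hb.1 hb.2.1 hb.2.2
  by_cases hc : c ≤ d ∧ c ≤ a ∧ c ≤ b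
  · exact key h.rotate.rotate hc.1 hc.2.1 hc.2.2
  simp only [Fin.le_def] at ha hb hc
  exact key h.rotate.rotate.rotate (by rw [Fin.le_def]; omega) (by rw [Fin.le_def]; omega)
    (by rw [Fin.le_def]; omega)

theorem rel_nextElem (π : Setoid (Fin l)) (i : Fin l) : π.r i (nextElem π i) :=
  (Nat.sInf_mem (s := {t : ℕ | 0 < t ∧ π.r i (i + (t : Fin l))})
    ⟨l, Nat.pos_of_ne_zero (NeZero.ne l), by simp⟩).2

theorem cyclicDist_nextElem_le {π : Setoid (Fin l)} {i j : Fin l} (hij : π.r i j)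
    (hji : j ≠ i) :
    0 < cyclicDist i (nextElem π i) ∧ cyclicDist i (nextElem π i) ≤ cyclicDist i j := by
  set S := {t : ℕ | 0 < t ∧ π.r i (i + (t : Fin l))}
  set T := sInf S
  have hmem : cyclicDist i j ∈ S := ⟨cyclicDist_pos hji, by rwa [add_cyclicDist]⟩
  have hT : 0 < T := (Nat.sInf_mem ⟨_, hmem⟩).1
  have hTj : T ≤ cyclicDist i j := Nat.sInf_le hmem
  have hTl := cyclicDist_lt i j
  have hd : cyclicDist i (nextElem π i) = T := by
    rw [show nextElem π i = i + (T : Fin l) from rfl, cyclicDist_add_natCast,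
      Nat.mod_eq_of_lt (by omega)]
  omega

theorem isCyclicallyOrdered_iff_forall_eq_nextElem {τ : Perm (Fin l)} :
    IsCyclicallyOrdered τ ↔ ∀ i, τ i = nextElem (cycleSetoid τ) i := by
  refine ⟨fun hτ i => ?_, fun h i j hij hji => h i ▸ (cyclicDist_nextElem_le hij hji).2⟩
  have hnext : τ.SameCycle i (nextElem (cycleSetoid τ) i) := rel_nextElem (cycleSetoid τ) i
  by_cases hfix : τ i = i
  · exact hfix.trans (hnext.eq_of_left hfix)
  have ⟨hpos, hle⟩ := cyclicDist_nextElem_le (π := cycleSetoid τ)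
    (sameCycle_self_apply τ i) hfix
  have hne : nextElem (cycleSetoid τ) i ≠ i := fun h => by simp [h] at hpos
  exact cyclicDist_inj.mp (le_antisymm (hτ i _ hnext hne) hle)

theorem cycleSetoid_eq_of_forall_eq_nextElem {π : Setoid (Fin l)} {σ : Perm (Fin l)}
    (hσ : ∀ i, σ i = nextElem π i) : cycleSetoid σ = π := by
  refine Setoid.ext fun i j => ⟨fun hij => ?_, fun hij => ?_⟩
  · change σ.SameCycle i j at hij
    obtain ⟨k, rfl⟩ := hij.exists_nat_pow_eq
    clear hij
    induction k with
    | zero => exact π.refl i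
    | succ k ih => rw [pow_succ', mul_apply, hσ]; exact π.trans ih (rel_nextElem π _)
  · change σ.SameCycle i j
    -- walk along `σ` from `i`, which approaches `j` in the cyclic order
    induction h : cyclicDist i j using Nat.strong_induction_on generalizing i with
    | _ n ih =>
    rcases eq_or_ne j i with rfl | hji
    · exact SameCycle.rfl
    have ⟨hpos, hle⟩ := cyclicDist_nextElem_le hij hji
    rw [← hσ] at hpos hle
    rcases eq_or_ne (σ i) j with hj | hj
    · exact hj ▸ sameCycle_self_apply σ i
    have hrel : π.r (σ i) j := π.trans (π.symm (hσ i ▸ rel_nextElem π i)) hij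
    have := cyclicDist_eq_sub hle
    exact sameCycle_apply_left.mp (ih _ (by omega) (σ i) hrel rfl)

end NextElem

theorem isMinimalFactorization_iff_nonCrossing {l : ℕ} [NeZero l] (τ : Perm (Fin l)) :
    IsMinimalFactorization τ ↔
      NonCrossing (cycleSetoid τ) ∧ ∀ i, τ i = nextElem (cycleSetoid τ) i := by
  rw [isMinimalFactorization_iff, nonCrossing_iff_not_hasCyclicCrossing,
    isCyclicallyOrdered_iff_forall_eq_nextElem, and_comm]

end NoncrossingFactorization

open NoncrossingFactorization

open scoped Classical in
/-- the free cumulant `R_{l+1}` of the multirectangular diagram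
is the sum, over non-crossing partitions `π` of `{1,…,l}`, of
`(-1)^{|π|+1} N^π`, where `N^π` is the power series of the bicolored map of the
minimal factorization `(σ_π, σ_π⁻¹ (1 … l))` determined by `π`, `σ_π` being the
permutation sending each `i` to the next element of its block in the cyclic
order `(1,…,l)`. -/
theorem freeCumulant_eq_sum_noncrossing (l : ℕ) [NeZero l]
    (s : Setoid (Fin l) → Equiv.Perm (Fin l))
    (hs : ∀ π : Setoid (Fin l), NonCrossing π → ∀ i, s π i = nextElem π i)
    (m : ℕ) (p q : Fin m → ℝ) :
    Rcum (l + 1) p q =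
      ∑ᶠ π : Setoid (Fin l),
        if NonCrossing π then
          (-1 : ℝ) ^ (Nat.card (Quotient π) + 1) *
            Nperm (s π) ((s π)⁻¹ * finRotate l) p q
        else 0 := by
  have : Fintype (Setoid (Fin l)) :=
    .ofInjective (fun π : Setoid (Fin l) => π.r) fun _ _ h =>
      Setoid.ext fun a b => iff_of_eq (congrFun (congrFun h a) b)
  have hsτ {τ : Perm (Fin l)} (hτ : IsMinimalFactorization τ) : s (cycleSetoid τ) = τ := by
    obtain ⟨hnc, hnext⟩ := (isMinimalFactorization_iff_nonCrossing τ).mp hτ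
    exact Equiv.ext fun i => (hs _ hnc i).trans (hnext i).symm
  have hcs {π : Setoid (Fin l)} (hπ : NonCrossing π) : cycleSetoid (s π) = π :=
    cycleSetoid_eq_of_forall_eq_nextElem (hs π hπ)
  change ∑ τ : Perm (Fin l),
    (if cycleCount τ + cycleCount (τ⁻¹ * finRotate l) = l + 1 then _ else 0) = _
  rw [finsum_eq_sum_of_fintype, ← Finset.sum_filter, ← Finset.sum_filter]
  refine Finset.sum_nbij' cycleSetoid s (fun τ hτ => ?_) (fun π hπ => ?_)
    (fun τ hτ => hsτ (Finset.mem_filter.mp hτ).2)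
    (fun π hπ => hcs (Finset.mem_filter.mp hπ).2)
    (fun τ hτ => by rw [hsτ (Finset.mem_filter.mp hτ).2]; rfl)
  · simp only [Finset.mem_filter, Finset.mem_univ, true_and] at hτ ⊢
    exact ((isMinimalFactorization_iff_nonCrossing τ).mp hτ).1
  · simp only [Finset.mem_filter, Finset.mem_univ, true_and] at hπ ⊢
    refine (isMinimalFactorization_iff_nonCrossing _).mpr ?_
    rw [hcs hπ]
    exact ⟨hπ, hs π hπ⟩
end
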